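/- arXiv:1903.07321 — 11 statements merged into one kernel-verified Lean document; each statement's English description precedes it below -/
import Mathlib

section
/- There is no integer $i$ with $0 \le i \le k-1$ such that $d + D \equiv d q^i \pmod{q^k - 1}$; equivalently, $\gamma^{d+D} \ne (\gamma^d)^{q^i}$ for all $0 \le i \le k-1$, so the minimal polynomials of $\gamma^d$ and $\gamma^{d+D}$ over $\mathbb{F}_q$ have no common zero. -/
/-!
Put `n = q^k - 1`, so `D = n / e` lies strictly between `0` and `n`. Multiplying the congruence
`d + D ≡ d q^i (mod n)` by `e` gives `n ∣ e d (q^i - 1)`, but `e d ≤ q - 1` and `i < k` make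
`e d (q^i - 1) < n`, so `d q^i = d`. The congruence then reads `D ≡ 0 (mod n)`, which is absurd.
Since `γ` has order `n`, the statement about powers of `γ` is the same congruence.
-/

namespace Nat

theorem sub_one_mul_pow_sub_one_lt_pow_sub_one {q i k : ℕ} (hq : 2 ≤ q) (hik : i < k) :
    (q - 1) * (q ^ i - 1) < q ^ k - 1 := by
  have hqi : 1 ≤ q ^ i := Nat.one_le_pow _ _ (by omega)
  have hsucc : q ^ (i + 1) ≤ q ^ k := Nat.pow_le_pow_right (by omega) hik
  calc (q - 1) * (q ^ i - 1) < (q - 1) * q ^ i := Nat.mul_lt_mul_of_pos_left (by omega) (by omega)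
    _ = q ^ (i + 1) - q ^ i := by rw [Nat.sub_one_mul, pow_succ, mul_comm]
    _ ≤ q ^ k - 1 := by omega

theorem mul_pow_eq_self_of_modEq {q i k m : ℕ} (hq : 2 ≤ q) (hik : i < k) (hm : m ≤ q - 1)
    (h : m ≡ m * q ^ i [MOD q ^ k - 1]) : m * q ^ i = m := by
  have hle : m ≤ m * q ^ i := Nat.le_mul_of_pos_right _ (Nat.pow_pos (by omega))
  have hdvd : q ^ k - 1 ∣ m * (q ^ i - 1) := by
    rw [Nat.mul_sub_one]; exact (Nat.modEq_iff_dvd' hle).mp h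
  have hlt : m * (q ^ i - 1) < q ^ k - 1 :=
    (Nat.mul_le_mul_right _ hm).trans_lt (sub_one_mul_pow_sub_one_lt_pow_sub_one hq hik)
  have hzero := Nat.eq_zero_of_dvd_of_lt hdvd hlt
  rw [Nat.mul_sub_one] at hzero
  omega

theorem not_add_div_modEq_self {n e a : ℕ} (hn : 0 < n) (he : 1 < e) (hen : e ∣ n) :
    ¬ a + n / e ≡ a [MOD n] := by
  rw [Nat.add_modEq_left_iff]
  intro hdvd
  have hpos : 0 < n / e := Nat.div_pos (Nat.le_of_dvd hn hen) (by omega)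
  exact absurd (Nat.le_of_dvd hpos hdvd) (not_le.mpr (Nat.div_lt_self hn he))

theorem not_add_div_modEq_mul_pow {q k d e i : ℕ} (hq : 2 ≤ q) (hik : i < k) (he : 1 < e)
    (hde : d * e ∣ q - 1) : ¬ d + (q ^ k - 1) / e ≡ d * q ^ i [MOD q ^ k - 1] := by
  have hn : 0 < q ^ k - 1 := by
    have := Nat.one_lt_pow (by omega : k ≠ 0) (by omega : 1 < q); omega
  have hen : e ∣ q ^ k - 1 := (dvd_mul_left e d |>.trans hde).trans <| by
    simpa only [one_pow] using Nat.sub_dvd_pow_sub_pow q 1 k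
  intro h
  have hscaled : e * d ≡ e * d * q ^ i [MOD q ^ k - 1] := by
    have := h.mul_left e
    rwa [mul_add, Nat.mul_div_cancel' hen, Nat.add_modulus_modEq_iff, ← mul_assoc] at this
  have hed : e * d ≤ q - 1 := Nat.le_of_dvd (by omega) (mul_comm d e ▸ hde)
  have hfix : d * q ^ i = d := by
    have := mul_pow_eq_self_of_modEq hq hik hed hscaled
    rw [mul_assoc] at this
    exact Nat.eq_of_mul_eq_mul_left (by omega) this
  rw [hfix] at h
  exact not_add_div_modEq_self hn he hen h

end Nat

theorem Units.val_pow_eq_val_pow_iff_modEq {K : Type*} [Field K] [Fintype K] {γ : Kˣ}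
    (hγ : ∀ x : Kˣ, x ∈ Subgroup.zpowers γ) {a b : ℕ} :
    (γ : K) ^ a = (γ : K) ^ b ↔ a ≡ b [MOD Fintype.card K - 1] := by
  rw [← Units.val_pow_eq_pow_val, ← Units.val_pow_eq_pow_val, Units.val_inj,
    pow_eq_pow_iff_modEq, orderOf_eq_card_of_forall_mem_zpowers hγ, Nat.card_units,
    Nat.card_eq_fintype_card]

theorem no_conjugate_zero_general
    (q k d e D : ℕ)
    (Fqk : Type) [Field Fqk] [Fintype Fqk]
    (hqk : Fintype.card Fqk = q ^ k)
    (γ : Fqkˣ) (hγ : ∀ x : Fqkˣ, x ∈ Subgroup.zpowers γ)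
    (he : 1 < e)
    (hde : d * e ∣ q - 1)
    (hD : D = (q ^ k - 1) / e) :
    ∀ i : ℕ, i ≤ k - 1 →
      ¬ (d + D ≡ d * q ^ i [MOD q ^ k - 1]) ∧
      ((γ : Fqk)) ^ (d + D) ≠ (((γ : Fqk)) ^ d) ^ (q ^ i) := by
  intro i hi
  have hqk1 : 1 < q ^ k := hqk ▸ Fintype.one_lt_card
  have hk : k ≠ 0 := by rintro rfl; simp at hqk1
  have hq : 1 < q := (one_lt_pow_iff hk).mp hqk1
  have hcong : ¬ d + D ≡ d * q ^ i [MOD q ^ k - 1] :=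
    hD ▸ Nat.not_add_div_modEq_mul_pow hq (by omega) he hde
  refine ⟨hcong, fun hpow => hcong ?_⟩
  rwa [← pow_mul, Units.val_pow_eq_val_pow_iff_modEq hγ, hqk] at hpow

/-- There is no `0 ≤ i ≤ k-1` with `d + D ≡ d q^i (mod q^k - 1)`; equivalently
`γ^(d+D) ≠ (γ^d)^(q^i)` for all such `i`, so the minimal polynomials of `γ^d`
and `γ^(d+D)` over `𝔽_q` have no common zero. -/
theorem no_conjugate_zero
    (q k d e D : ℕ)
    (hq : IsPrimePow q) (hk : 1 ≤ k)
    (Fqk : Type) [Field Fqk] [Fintype Fqk]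
    (hqk : Fintype.card Fqk = q ^ k)
    (γ : Fqkˣ) (hγ : ∀ x : Fqkˣ, x ∈ Subgroup.zpowers γ)
    (hd : 0 < d) (he : 1 < e)
    (hde : d * e ∣ q - 1)
    (hD : D = (q ^ k - 1) / e) :
    ∀ i : ℕ, i ≤ k - 1 →
      ¬ (d + D ≡ d * q ^ i [MOD q ^ k - 1]) ∧
      ((γ : Fqk)) ^ (d + D) ≠ (((γ : Fqk)) ^ d) ^ (q ^ i) :=
  no_conjugate_zero_general q k d e D Fqk hqk γ hγ he hde hD
end

section
/- The minimal polynomial of $\gamma^d$ over $\mathbb{F}_q$ has degree $k$; equivalently, $\mathbb{F}_q(\gamma^d) = \mathbb{F}_{q^k}$, i.e. the smallest positive integer $h$ such that $d q^h \equiv d \pmod{q^k-1}$ is $h = k$. -/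
/-!
Write `α = γ ^ d` and `m` for the degree of its minimal polynomial over `𝔽_q`. Then `𝔽_q(α)` has
`q ^ m` elements, so `α ^ q ^ m = α`, i.e. `d q ^ m ≡ d` modulo the order `q ^ k - 1` of `γ`.
Also `m ≤ [𝔽_{q^k} : 𝔽_q] = k`. The congruence has no solution `0 < h < k`, because `0 < d < q` forces
`0 < d (q ^ h - 1) ≤ (q - 1)(q ^ (k - 1) - 1) < q ^ k - 1`. Hence `m = k`.
-/

open IntermediateField

namespace Nat

theorem sub_one_mul_sub_one_lt_mul_sub_one {a b : ℕ} (ha : 1 < a) (hb : 0 < b) :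
    (a - 1) * (b - 1) < a * b - 1 := by
  obtain ⟨a, rfl⟩ : ∃ r, a = r + 1 := ⟨a - 1, by omega⟩
  obtain ⟨b, rfl⟩ : ∃ r, b = r + 1 := ⟨b - 1, by omega⟩
  simp only [Nat.add_sub_cancel]
  ring_nf
  omega

theorem le_of_mul_pow_modEq {q d h k : ℕ} (hd : 0 < d) (hdq : d < q) (hh : 0 < h)
    (hmod : d * q ^ h ≡ d [MOD q ^ k - 1]) : k ≤ h := by
  by_contra! hhk
  have hqh : q ≤ q ^ h := Nat.le_self_pow hh.ne' q
  have hdvd : q ^ k - 1 ∣ d * (q ^ h - 1) := by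
    rw [Nat.mul_sub, mul_one]
    exact (Nat.modEq_iff_dvd' (Nat.le_mul_of_pos_right d (by omega))).mp hmod.symm
  have hqhk : q ^ h ≤ q ^ (k - 1) := Nat.pow_le_pow_right (by omega) (by omega)
  have hqk : q * q ^ (k - 1) = q ^ k := by rw [← pow_succ']; congr 1; omega
  have := calc
    q ^ k - 1 ≤ d * (q ^ h - 1) := Nat.le_of_dvd (Nat.mul_pos hd (by omega)) hdvd
    _ ≤ (q - 1) * (q ^ (k - 1) - 1) := Nat.mul_le_mul (by omega) (by omega)
    _ < q * q ^ (k - 1) - 1 := sub_one_mul_sub_one_lt_mul_sub_one (by omega) (Nat.pow_pos (by omega))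
    _ = q ^ k - 1 := by rw [hqk]
  exact lt_irrefl _ this

theorem isLeast_mul_pow_modEq {q d k : ℕ} (hd : 0 < d) (hdq : d < q) (hk : 0 < k) :
    IsLeast {h : ℕ | 0 < h ∧ d * q ^ h ≡ d [MOD q ^ k - 1]} k := by
  refine ⟨⟨hk, ?_⟩, fun h ⟨hh, hmod⟩ => le_of_mul_pow_modEq hd hdq hh hmod⟩
  simpa using ((Nat.modEq_sub (Nat.one_le_pow k q (by omega))).mul_left d)

end Nat

theorem pow_card_pow_natDegree_minpoly {K L : Type*} [Field K] [Fintype K] [Field L] [Algebra K L]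
    {x : L} (hx : IsIntegral K x) :
    x ^ Fintype.card K ^ (minpoly K x).natDegree = x := by
  have : FiniteDimensional K K⟮x⟯ := adjoin.finiteDimensional hx
  have : Finite K⟮x⟯ := Module.finite_of_finite K
  have : Fintype K⟮x⟯ := Fintype.ofFinite _
  have hcard : Fintype.card K⟮x⟯ = Fintype.card K ^ (minpoly K x).natDegree := by
    rw [Module.card_eq_pow_finrank (K := K), adjoin.finrank hx]
  have := congrArg (algebraMap K⟮x⟯ L) (FiniteField.pow_card (AdjoinSimple.gen K x))
  simpa [hcard] using this

theorem FiniteField.finrank_eq_of_card_eq_pow {K L : Type*} [Field K] [Fintype K] [Field L]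
    [Fintype L] [Algebra K L] {k : ℕ} (hL : Fintype.card L = Fintype.card K ^ k) :
    Module.finrank K L = k :=
  (Nat.pow_right_injective (Fintype.one_lt_card (α := K)) <|
    (Module.card_eq_pow_finrank (K := K) (V := L)).symm.trans hL)

theorem coe_pow_eq_coe_pow_iff_modEq_card_sub_one {L : Type*} [Field L] [Fintype L] {γ : Lˣ}
    (hγ : ∀ x : Lˣ, x ∈ Subgroup.zpowers γ) {a b : ℕ} :
    (γ : L) ^ a = (γ : L) ^ b ↔ a ≡ b [MOD Fintype.card L - 1] := by
  classical
  rw [← Fintype.card_units, ← Nat.card_eq_fintype_card, ← orderOf_eq_card_of_forall_mem_zpowers hγ,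
    ← pow_eq_pow_iff_modEq, ← Units.val_pow_eq_pow_val, ← Units.val_pow_eq_pow_val, Units.val_inj]

theorem minpoly_gamma_pow_d_degree_general
    (q k d e : ℕ)
    (hq : IsPrimePow q) (hk : 1 ≤ k)
    (Fq Fqk : Type) [Field Fq] [Field Fqk] [Fintype Fq] [Fintype Fqk]
    [Algebra Fq Fqk]
    (hcard : Fintype.card Fq = q)
    (hqk : Fintype.card Fqk = q ^ k)
    (γ : Fqkˣ) (hγ : ∀ x : Fqkˣ, x ∈ Subgroup.zpowers γ)
    (hd : 0 < d)
    (hde : d * e ∣ q - 1) :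
    (minpoly Fq ((γ : Fqk) ^ d)).natDegree = k ∧
    IsLeast {h : ℕ | 0 < h ∧ d * q ^ h ≡ d [MOD q ^ k - 1]} k := by
  have hdq : d < q := by
    have := Nat.le_of_dvd (by have := hq.two_le; omega) (dvd_of_mul_right_dvd hde)
    omega
  have hleast := Nat.isLeast_mul_pow_modEq hd hdq hk
  refine ⟨le_antisymm ?_ (hleast.2 ⟨minpoly.natDegree_pos (.of_finite Fq _), ?_⟩), hleast⟩
  · calc (minpoly Fq ((γ : Fqk) ^ d)).natDegree ≤ Module.finrank Fq Fqk := minpoly.natDegree_le _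
      _ = k := FiniteField.finrank_eq_of_card_eq_pow (hcard ▸ hqk)
  · rw [← hqk, ← coe_pow_eq_coe_pow_iff_modEq_card_sub_one hγ, pow_mul, ← hcard]
    exact pow_card_pow_natDegree_minpoly (.of_finite Fq _)

/-- The minimal polynomial of `γ^d` over `𝔽_q` has degree `k`; equivalently, the
smallest positive integer `h` with `d q^h ≡ d (mod q^k - 1)` is `h = k`. -/
theorem minpoly_gamma_pow_d_degree
    (q k d e : ℕ)
    (hq : IsPrimePow q) (hk : 1 ≤ k)
    (Fq Fqk : Type) [Field Fq] [Field Fqk] [Fintype Fq] [Fintype Fqk]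
    [Algebra Fq Fqk]
    (hcard : Fintype.card Fq = q)
    (hqk : Fintype.card Fqk = q ^ k)
    (γ : Fqkˣ) (hγ : ∀ x : Fqkˣ, x ∈ Subgroup.zpowers γ)
    (hd : 0 < d) (he : 1 < e)
    (hde : d * e ∣ q - 1) :
    (minpoly Fq ((γ : Fqk) ^ d)).natDegree = k ∧
    IsLeast {h : ℕ | 0 < h ∧ d * q ^ h ≡ d [MOD q ^ k - 1]} k :=
  minpoly_gamma_pow_d_degree_general q k d e hq hk Fq Fqk hcard hqk γ hγ hd hde
end

section
/- The $\mathbb{F}_q$-linear map $\mathbb{F}_{q^k} \times \mathbb{F}_{q^k} \to \mathbb{F}_q^n$ sending $(u,v)$ to the codeword $c_{u,v} = (\mathrm{Tr}(u\beta^{di} + v\beta^{(d+D)i}))_{i=0}^{n-1}$ is injective; consequently the code $C = \{c_{u,v} : u,v \in \mathbb{F}_{q^k}\}$ has exactly $q^{2k}$ codewords, i.e. $C$ is an $[n, 2k]$ linear code over $\mathbb{F}_q$. -/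
/-!
Write `q^k - 1 = d e s`. Then `D = d s`, and `G = β^d` has order `e s ≤ n`, so the codeword of
`(u, v)` lists `Tr(u G^i + v G^{(1+s)i})` for all `i < e s`. Since `G^s` is an `e`-th root of
unity, on the `e`-th powers `y` of `G` this is `Tr((u + v) y)`, and on their coset `G y` it is
`Tr((u + G^s v) G y)`. A nonzero functional `Tr(w ·)` vanishes at exactly `q^{k-1}` points, fewer
than `0` together with the `s ≥ q^{k-1}` elements `y`. Hence `u + v = 0 = u + G^s v`, and
`G^s ≠ 1` gives `u = v = 0`.
-/

theorem LinearMap.card_ker_mul_card_eq {K V : Type*} [Field K] [AddCommGroup V] [Module K V]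
    {f : V →ₗ[K] K} (hf : f ≠ 0) : Nat.card (LinearMap.ker f) * Nat.card K = Nat.card V := by
  have hrange : f.toAddMonoidHom.range = ⊤ :=
    AddMonoidHom.range_eq_top.2 (f.surjective_of_ne_zero hf)
  rw [← f.toAddMonoidHom.ker.card_mul_index, AddSubgroup.index_ker, hrange,
    AddSubgroup.card_top]
  rfl

section Trace

variable {K L : Type*} [Field K] [Field L] [Algebra K L] [Finite L]

theorem eq_zero_of_forall_mem_trace_mul_eq_zero {w : L} (S : Finset L)
    (hS : Nat.card L < S.card * Nat.card K)
    (h : ∀ x ∈ S, Algebra.trace K L (w * x) = 0) : w = 0 := by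
  by_contra hw
  have hf : Algebra.traceForm K L w ≠ 0 := fun h0 =>
    hw ((traceForm_nondegenerate K L).1 w fun x => by simp [h0])
  have hS_ker : S.card ≤ Nat.card (LinearMap.ker (Algebra.traceForm K L w)) := by
    rw [← Nat.card_eq_finsetCard]
    exact Nat.card_mono (Set.toFinite _) fun x hx => by simpa using h x hx
  have hker := LinearMap.card_ker_mul_card_eq hf
  have hS_ker' := Nat.mul_le_mul_right (Nat.card K) hS_ker
  omega

theorem eq_zero_of_forall_trace_mul_pow_eq_zero {w y : L}
    (hy : Nat.card L < (orderOf y + 1) * Nat.card K)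
    (h : ∀ m < orderOf y, Algebra.trace K L (w * y ^ m) = 0) : w = 0 := by
  classical
  set S := insert 0 ((Finset.range (orderOf y)).image (y ^ ·))
  have hcard : S.card = orderOf y + 1 := by
    rw [Finset.card_insert_of_notMem, Finset.card_image_of_injOn, Finset.card_range]
    · intro i hi j hj
      exact pow_injOn_Iio_orderOf (by simpa using hi) (by simpa using hj)
    · simp only [Finset.mem_image, Finset.mem_range, not_exists, not_and]
      rintro m hm h0
      rw [eq_zero_of_pow_eq_zero h0, orderOf_zero] at hm
      exact Nat.not_lt_zero m hm
  refine eq_zero_of_forall_mem_trace_mul_eq_zero S (hcard ▸ hy) fun x hx => ?_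
  obtain rfl | ⟨m, hm, rfl⟩ : x = 0 ∨ ∃ m < orderOf y, y ^ m = x := by simpa [S] using hx
  · simp
  · exact h m hm

variable {G : L} {e s : ℕ}

theorem eq_zero_of_forall_trace_pow_eq_zero (hG : orderOf G = e * s) (he : 1 < e)
    (hcard : Nat.card L < (s + 1) * Nat.card K) {u v : L}
    (h : ∀ i < e * s, Algebra.trace K L (u * G ^ i + v * G ^ ((1 + s) * i)) = 0) :
    u = 0 ∧ v = 0 := by
  have hs : s ≠ 0 := by
    rintro rfl
    have hKL := Nat.card_le_card_of_injective _ (algebraMap K L).injective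
    omega
  have hGes : G ^ (e * s) = 1 := hG ▸ pow_orderOf_eq_one G
  have hG0 : G ≠ 0 := by
    rintro rfl
    rw [orderOf_zero] at hG
    exact (Nat.mul_ne_zero (by omega) hs) hG.symm
  have hy : orderOf (G ^ e) = s := by
    rw [orderOf_pow_of_dvd (by omega) (hG ▸ dvd_mul_right e s), hG,
      Nat.mul_div_cancel_left s (by omega)]
  have hω : (G ^ s) ^ e = 1 := by rw [← pow_mul, mul_comm, hGes]
  have hshift : ∀ i, G ^ ((1 + s) * i) = G ^ i * (G ^ s) ^ i := fun i => by
    rw [add_mul, one_mul, pow_add, pow_mul]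
  have hsum : u + v = 0 := by
    refine eq_zero_of_forall_trace_mul_pow_eq_zero (hy.symm ▸ hcard) fun m hm => ?_
    rw [hy] at hm
    convert h (e * m) (Nat.mul_lt_mul_of_pos_left hm (by omega)) using 2
    rw [hshift, pow_mul (G ^ s), hω, one_pow, pow_mul]
    ring
  have hcoset : u + G ^ s * v = 0 := by
    refine (mul_eq_zero.1 (eq_zero_of_forall_trace_mul_pow_eq_zero
      (w := (u + G ^ s * v) * G) (hy.symm ▸ hcard) fun m hm => ?_)).resolve_right hG0
    rw [hy] at hm
    convert h (e * m + 1) (by nlinarith) using 2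
    rw [hshift, pow_succ (G ^ s), pow_mul (G ^ s), hω, one_pow, one_mul, pow_succ, pow_mul]
    ring
  have hGs : G ^ s ≠ 1 :=
    pow_ne_one_of_lt_orderOf hs (hG ▸ lt_mul_of_one_lt_left (Nat.pos_of_ne_zero hs) he)
  have hv : v = 0 := by
    have : (G ^ s - 1) * v = 0 := by linear_combination hcoset - hsum
    exact (mul_eq_zero.1 this).resolve_left (sub_ne_zero.2 hGs)
  exact ⟨by linear_combination hsum - hv, hv⟩

theorem injective_trace_pow (hG : orderOf G = e * s) (he : 1 < e)
    (hcard : Nat.card L < (s + 1) * Nat.card K) {n : ℕ} (hn : e * s ≤ n) :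
    Function.Injective fun uv : L × L => fun i : Fin n =>
      Algebra.trace K L (uv.1 * G ^ (i : ℕ) + uv.2 * G ^ ((1 + s) * i)) := by
  intro a b hab
  obtain ⟨h1, h2⟩ := eq_zero_of_forall_trace_pow_eq_zero hG he hcard
    (u := a.1 - b.1) (v := a.2 - b.2) fun i hi => by
      have := congrFun hab ⟨i, hi.trans_le hn⟩
      rw [← sub_eq_zero, ← map_sub] at this
      rw [← this]
      ring_nf
  exact Prod.ext (sub_eq_zero.1 h1) (sub_eq_zero.1 h2)

end Trace

theorem code_C_dimension_general
    (q n k d e D : ℕ)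
    (Fq Fqk : Type) [Field Fq] [Field Fqk] [Fintype Fq] [Fintype Fqk]
    [Algebra Fq Fqk]
    (hq : Fintype.card Fq = q)
    (hqk : Fintype.card Fqk = q ^ k)
    (hn : 3 ≤ n)
    (he : 1 < e)
    (hde : d * e ∣ q - 1)
    (hD : D = (q ^ k - 1) / e)
    (hdn : q ^ k - 1 ∣ d * n)
    (γ : Fqkˣ) (hγ : ∀ x : Fqkˣ, x ∈ Subgroup.zpowers γ) :
    Function.Injective (fun uv : Fqk × Fqk => fun i : Fin n =>
      Algebra.trace Fq Fqk
        (uv.1 * ((γ⁻¹ : Fqkˣ) : Fqk) ^ (d * (i : ℕ)) +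
         uv.2 * ((γ⁻¹ : Fqkˣ) : Fqk) ^ ((d + D) * (i : ℕ)))) ∧
    Nat.card {c : Fin n → Fq | ∃ u v : Fqk, c = fun i : Fin n =>
      Algebra.trace Fq Fqk
        (u * ((γ⁻¹ : Fqkˣ) : Fqk) ^ (d * (i : ℕ)) +
         v * ((γ⁻¹ : Fqkˣ) : Fqk) ^ ((d + D) * (i : ℕ)))} = q ^ (2 * k) := by
  have hq2 : 2 ≤ q := hq ▸ Fintype.one_lt_card
  have hqk1 : 1 < q ^ k := hqk ▸ Fintype.one_lt_card
  obtain ⟨s, hs⟩ : d * e ∣ q ^ k - 1 :=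
    hde.trans (by simpa using Nat.sub_dvd_pow_sub_pow q 1 k)
  have hd0 : d ≠ 0 := by rintro rfl; omega
  have hDs : D = d * s := by rw [hD, hs, mul_right_comm, Nat.mul_div_cancel _ (by omega)]
  have hβ : orderOf ((γ⁻¹ : Fqkˣ) : Fqk) = d * (e * s) := by
    rw [orderOf_units, orderOf_inv, orderOf_eq_card_of_forall_mem_zpowers hγ, Nat.card_units,
      Nat.card_eq_fintype_card, hqk, hs, mul_assoc]
  have hG : orderOf (((γ⁻¹ : Fqkˣ) : Fqk) ^ d) = e * s := by
    rw [orderOf_pow_of_dvd hd0 (hβ ▸ dvd_mul_right _ _), hβ,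
      Nat.mul_div_cancel_left _ (by omega)]
  have hcard : Nat.card Fqk < (s + 1) * Nat.card Fq := by
    have hdes := Nat.mul_le_mul_right s (Nat.le_of_dvd (by omega) hde)
    rw [Nat.card_eq_fintype_card, Nat.card_eq_fintype_card, hq, hqk]
    zify [hqk1.le, show 1 ≤ q by omega] at hs hdes ⊢
    nlinarith
  have hlen : e * s ≤ n := by
    rw [hs, mul_assoc] at hdn
    exact Nat.le_of_dvd (by omega) ((mul_dvd_mul_iff_left hd0).1 hdn)
  have hinj := injective_trace_pow (K := Fq) hG he hcard hlen
  simp only [← pow_mul, ← mul_assoc, show d * (1 + s) = d + D by rw [hDs]; ring] at hinj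
  refine ⟨hinj, ?_⟩
  trans Nat.card (Fqk × Fqk)
  · rw [← Nat.card_range_of_injective hinj]
    refine Nat.card_congr (Equiv.setCongr ?_)
    ext c
    simp [eq_comm]
  · rw [Nat.card_prod, Nat.card_eq_fintype_card, hqk, two_mul, pow_add]

/-- The `𝔽_q`-linear map `(u,v) ↦ c_{u,v}` is injective; consequently the code
`C` has exactly `q^(2k)` codewords, i.e. `C` is an `[n, 2k]` linear code. -/
theorem code_C_dimension
    (q n k d e D : ℕ)
    (Fq Fqk : Type) [Field Fq] [Field Fqk] [Fintype Fq] [Fintype Fqk]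
    [Algebra Fq Fqk]
    (hq : Fintype.card Fq = q)
    (hqk : Fintype.card Fqk = q ^ k)
    (hn : 3 ≤ n) (hnq : Nat.Coprime n q)
    (hk : k = orderOf (q : ZMod n))
    (hd : 0 < d) (he : 1 < e)
    (hde : d * e ∣ q - 1)
    (hD : D = (q ^ k - 1) / e)
    (hdn : q ^ k - 1 ∣ d * n)
    (γ : Fqkˣ) (hγ : ∀ x : Fqkˣ, x ∈ Subgroup.zpowers γ) :
    Function.Injective (fun uv : Fqk × Fqk => fun i : Fin n =>
      Algebra.trace Fq Fqk
        (uv.1 * ((γ⁻¹ : Fqkˣ) : Fqk) ^ (d * (i : ℕ)) +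
         uv.2 * ((γ⁻¹ : Fqkˣ) : Fqk) ^ ((d + D) * (i : ℕ)))) ∧
    Nat.card {c : Fin n → Fq | ∃ u v : Fqk, c = fun i : Fin n =>
      Algebra.trace Fq Fqk
        (u * ((γ⁻¹ : Fqkˣ) : Fqk) ^ (d * (i : ℕ)) +
         v * ((γ⁻¹ : Fqkˣ) : Fqk) ^ ((d + D) * (i : ℕ)))} = q ^ (2 * k) :=
  code_C_dimension_general q n k d e D Fq Fqk hq hqk hn he hde hD hdn γ hγ
end

section
/- For a positive integer $m$, the following are equivalent: (a) $\gamma^{Dm} = 1$ and $\gamma^{dm} \in \mathbb{F}_q$ (i.e. there is $c \in \mathbb{F}_q$ with $x^m - c$ having both $\gamma^d$ and $\gamma^{d+D}$ as roots); (b) $m$ is divisible by $\dfrac{(q^k-1)e}{(q-1)f}$, where $f = \gcd\big((q^k-1)/(q-1),\, de\big)$. -/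
/-!
`γ` has order `q^k - 1`, so `γ^(Dm) = 1` iff `e ∣ m`. The nonzero elements of `𝔽_q` inside
`𝔽_{q^k}` are exactly the `(q-1)`-th roots of unity, so `γ^(dm) ∈ 𝔽_q` iff `T ∣ dm` with
`T = (q^k-1)/(q-1)`, i.e. iff `T / gcd(T, d) ∣ m`. Both conditions together say that
`lcm(T / gcd(T, d), e) = Te / gcd(T, de)` divides `m`.
-/

open Polynomial

namespace Nat

theorem dvd_mul_left_iff_div_gcd_dvd {n d m : ℕ} (hn : n ≠ 0) :
    n ∣ d * m ↔ n / n.gcd d ∣ m := by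
  obtain ⟨g, n', d', hg, hcop, rfl, rfl⟩ :=
    Nat.exists_coprime' (Nat.gcd_pos_of_pos_left d (Nat.pos_of_ne_zero hn))
  rw [Nat.gcd_mul_right, hcop.gcd_eq_one, one_mul, Nat.mul_div_cancel _ hg,
    mul_right_comm, Nat.mul_dvd_mul_iff_right hg, hcop.dvd_mul_left]

theorem mul_div_gcd_mul_eq_lcm {n d e : ℕ} (hn : n ≠ 0) :
    n * e / n.gcd (d * e) = (n / n.gcd d).lcm e := by
  obtain ⟨g, n', d', hg, hcop, rfl, rfl⟩ :=
    Nat.exists_coprime' (Nat.gcd_pos_of_pos_left d (Nat.pos_of_ne_zero hn))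
  rw [Nat.gcd_mul_right, hcop.gcd_eq_one, one_mul, Nat.mul_div_cancel _ hg,
    mul_right_comm d', Nat.gcd_mul_right, hcop.symm.gcd_mul_left_cancel_right e,
    mul_right_comm n', Nat.mul_div_mul_right _ _ hg]
  rfl

theorem dvd_and_dvd_mul_iff {n d e m : ℕ} (hn : n ≠ 0) :
    e ∣ m ∧ n ∣ d * m ↔ n * e / n.gcd (d * e) ∣ m := by
  rw [mul_div_gcd_mul_eq_lcm hn, Nat.lcm_dvd_iff, dvd_mul_left_iff_div_gcd_dvd hn, and_comm]

end Nat

namespace FiniteField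

variable {K L : Type*} [Field K] [Fintype K] [Field L] [Algebra K L]

theorem mem_range_algebraMap_iff_pow_card_eq (x : L) :
    x ∈ Set.range (algebraMap K L) ↔ x ^ Fintype.card K = x := by
  have hq := Fintype.one_lt_card (α := K)
  have hmap := roots_map_of_injective_of_card_eq_natDegree (algebraMap K L).injective
    (by rw [roots_X_pow_card_sub_X, X_pow_card_sub_X_natDegree_eq K hq]; rfl)
  rw [roots_X_pow_card_sub_X, Polynomial.map_sub, Polynomial.map_pow, map_X] at hmap
  have := congrArg (x ∈ ·) hmap
  simp only [Multiset.mem_map, Finset.mem_val, Finset.mem_univ, true_and,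
    mem_roots (X_pow_card_sub_X_ne_zero L hq), IsRoot.def, eval_sub, eval_pow, eval_X,
    sub_eq_zero] at this
  exact Iff.of_eq this

theorem mem_range_algebraMap_iff_pow_card_sub_one_eq_one {x : L} (hx : x ≠ 0) :
    x ∈ Set.range (algebraMap K L) ↔ x ^ (Fintype.card K - 1) = 1 := by
  rw [mem_range_algebraMap_iff_pow_card_eq, ← Nat.sub_add_cancel Fintype.card_pos, pow_succ,
    mul_eq_right₀ hx, Nat.add_sub_cancel]

theorem val_pow_eq_one_iff_of_forall_mem_zpowers [Fintype L] {γ : Lˣ}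
    (hγ : ∀ x, x ∈ Subgroup.zpowers γ) (n : ℕ) :
    (γ : L) ^ n = 1 ↔ Fintype.card L - 1 ∣ n := by
  classical
  rw [← Units.val_pow_eq_pow_val, Units.val_eq_one, ← orderOf_dvd_iff_pow_eq_one,
    orderOf_eq_card_of_forall_mem_zpowers hγ, Nat.card_eq_fintype_card, Fintype.card_units]

end FiniteField

theorem binomial_vanishing_iff_general
    (q k d e D : ℕ)
    (Fq Fqk : Type) [Field Fq] [Field Fqk] [Fintype Fq] [Fintype Fqk]
    [Algebra Fq Fqk]
    (hcard : Fintype.card Fq = q)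
    (hqk : Fintype.card Fqk = q ^ k)
    (γ : Fqkˣ) (hγ : ∀ x : Fqkˣ, x ∈ Subgroup.zpowers γ)
    (hde : d * e ∣ q - 1)
    (hD : D = (q ^ k - 1) / e) :
    ∀ m : ℕ, 0 < m →
      (((γ : Fqk)) ^ (D * m) = 1 ∧
        ∃ c : Fq, ((γ : Fqk)) ^ (d * m) = algebraMap Fq Fqk c)
      ↔ ((q ^ k - 1) * e) / ((q - 1) * Nat.gcd ((q ^ k - 1) / (q - 1)) (d * e)) ∣ m := by
  intro m
  -- the statement parses as `(0 < m → …) ↔ …`, which also holds for `m = 0`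
  rcases m.eq_zero_or_pos with rfl | hm
  · exact iff_of_true (fun h => absurd h (lt_irrefl 0)) (dvd_zero _)
  rw [imp_iff_right hm]
  have hq : 1 < q := hcard ▸ Fintype.one_lt_card
  have hqk1 : 1 < q ^ k := hqk ▸ Fintype.one_lt_card
  have hQN : q - 1 ∣ q ^ k - 1 := by simpa only [one_pow] using Nat.sub_dvd_pow_sub_pow q 1 k
  have heN : e ∣ q ^ k - 1 := ((dvd_mul_left e d).trans hde).trans hQN
  have hDe : q ^ k - 1 = D * e := hD ▸ (Nat.div_mul_cancel heN).symm
  have hD0 : 0 < D := Nat.pos_of_ne_zero fun h => by rw [h, zero_mul] at hDe; omega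
  obtain ⟨T, hT⟩ := hQN
  have hT0 : T ≠ 0 := fun h => by rw [h, mul_zero] at hT; omega
  have hpow := FiniteField.val_pow_eq_one_iff_of_forall_mem_zpowers hγ
  rw [hqk] at hpow
  have hord : (γ : Fqk) ^ (D * m) = 1 ↔ e ∣ m := by
    rw [hpow, hDe, Nat.mul_dvd_mul_iff_left hD0]
  have hfix : (∃ c : Fq, (γ : Fqk) ^ (d * m) = algebraMap Fq Fqk c) ↔ T ∣ d * m := by
    simp only [eq_comm (a := (γ : Fqk) ^ (d * m))]
    rw [← Set.mem_range, FiniteField.mem_range_algebraMap_iff_pow_card_sub_one_eq_one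
      (pow_ne_zero _ γ.ne_zero), hcard, ← pow_mul, hpow, hT, mul_comm (d * m),
      Nat.mul_dvd_mul_iff_left (by omega)]
  rw [hord, hfix, hT, Nat.mul_div_cancel_left _ (by omega), mul_assoc,
    Nat.mul_div_mul_left _ _ (by omega)]
  exact Nat.dvd_and_dvd_mul_iff hT0

/-- For a positive integer `m`, the following are equivalent:
(a) `γ^(Dm) = 1` and `γ^(dm) ∈ 𝔽_q`;
(b) `m` is divisible by `(q^k-1)e / ((q-1)f)`, where `f = gcd((q^k-1)/(q-1), de)`. -/
theorem binomial_vanishing_iff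
    (q k d e D : ℕ)
    (hq : IsPrimePow q) (hk : 1 ≤ k)
    (Fq Fqk : Type) [Field Fq] [Field Fqk] [Fintype Fq] [Fintype Fqk]
    [Algebra Fq Fqk]
    (hcard : Fintype.card Fq = q)
    (hqk : Fintype.card Fqk = q ^ k)
    (γ : Fqkˣ) (hγ : ∀ x : Fqkˣ, x ∈ Subgroup.zpowers γ)
    (hd : 0 < d) (he : 1 < e)
    (hde : d * e ∣ q - 1)
    (hD : D = (q ^ k - 1) / e) :
    ∀ m : ℕ, 0 < m →
      (((γ : Fqk)) ^ (D * m) = 1 ∧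
        ∃ c : Fq, ((γ : Fqk)) ^ (d * m) = algebraMap Fq Fqk c)
      ↔ ((q ^ k - 1) * e) / ((q - 1) * Nat.gcd ((q ^ k - 1) / (q - 1)) (d * e)) ∣ m :=
  binomial_vanishing_iff_general q k d e D Fq Fqk hcard hqk γ hγ hde hD
end

section
/- The number of integers $m$ with $1 \le m \le n-1$ for which there exists $c \in \mathbb{F}_q$ with $\gamma^{dm} = c$ and $\gamma^{(d+D)m} = c$ equals $\dfrac{\lambda f (q-1)}{de} - 1$; consequently, the number $B_2$ of codewords of Hamming weight $2$ in the dual code $C^\perp$ equals $\big(\frac{\lambda f (q-1)}{de} - 1\big)(q-1)$. -/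
/-!
Since `γ` has order `N = q^k - 1 = M(q - 1) = De` with `M = N/(q - 1)`, the element `γ^(dm)`
lies in `𝔽_q` iff `M ∣ dm`, and `γ^((d+D)m) = γ^(dm)` iff `γ^(Dm) = 1` iff `e ∣ m`. Together
these say that `m` is a multiple of `L = Me / gcd(M, de)`, and `n = L · λf(q - 1)/(de)`, so
there are `λf(q - 1)/(de) - 1` such `m` in `[1, n - 1]`; each comes with `q - 1` nonzero
coefficients.
-/

/-- `e ∣ m` and `M ∣ dm` say `Me ∣ Mm` and `Me ∣ dem`, i.e. `Me ∣ gcd(M, de) m`. -/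
theorem Nat.dvd_mul_and_dvd_iff_mul_div_gcd_dvd {M d e m : ℕ} (hM : 0 < M) (he : 0 < e) :
    M ∣ d * m ∧ e ∣ m ↔ M * e / Nat.gcd M (d * e) ∣ m := by
  rw [Nat.div_dvd_iff_dvd_mul (Dvd.dvd.mul_right (Nat.gcd_dvd_left _ _) _)
      (Nat.gcd_pos_of_pos_left _ hM), ← Nat.gcd_mul_right, Nat.dvd_gcd_iff,
    Nat.mul_dvd_mul_iff_left hM, mul_right_comm d e m, Nat.mul_dvd_mul_iff_right he, and_comm]

theorem Nat.mul_div_gcd_pos {M d e : ℕ} (hM : 0 < M) (he : 0 < e) :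
    0 < M * e / Nat.gcd M (d * e) :=
  Nat.div_pos (Nat.le_of_dvd (Nat.mul_pos hM he) ((Nat.gcd_dvd_left _ _).mul_right e))
    (Nat.gcd_pos_of_pos_left _ hM)

theorem Nat.div_mul_div_eq_of_mul_eq {M e f s d n lam : ℕ} (hf : f ∣ M) (hf0 : 0 < f)
    (hde : d * e ∣ s) (hde0 : 0 < d * e) (hn : lam * (M * s) = d * n) :
    M * e / f * (lam * f * s / (d * e)) = n := by
  obtain ⟨M, rfl⟩ := hf
  obtain ⟨t, rfl⟩ := hde
  rw [mul_assoc, Nat.mul_div_cancel_left _ hf0,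
    show lam * f * (d * e * t) = d * e * (lam * f * t) by ring, Nat.mul_div_cancel_left _ hde0]
  refine Nat.eq_of_mul_eq_mul_left (Nat.pos_of_mul_pos_right hde0) ?_
  rw [← hn]
  ring

theorem Nat.mul_sub_one_div_left {L : ℕ} (hL : 0 < L) (T : ℕ) : (L * T - 1) / L = T - 1 := by
  rcases T with _ | T
  · simp
  · rw [Nat.mul_add_one, Nat.add_sub_assoc (show 1 ≤ L from hL), Nat.mul_add_div hL,
      Nat.div_eq_of_lt (Nat.sub_lt hL one_pos), add_zero, Nat.add_sub_cancel]

theorem Nat.card_multiples_le_mul_sub_one {L : ℕ} (hL : 0 < L) (T : ℕ) :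
    Nat.card {m : ℕ // 1 ≤ m ∧ m ≤ L * T - 1 ∧ L ∣ m} = T - 1 := by
  rw [← Nat.mul_sub_one_div_left hL T, ← Nat.Ioc_filter_dvd_card_eq_div,
    ← Nat.card_eq_finsetCard]
  exact Nat.card_congr <| Equiv.subtypeEquivRight fun m => by
    simp only [Finset.mem_filter, Finset.mem_Ioc]; omega

section FiniteSubfield

variable {K L : Type*} [Field K] [Finite K] [Field L] [Algebra K L]

theorem range_unitsMap_algebraMap_eq_rootsOfUnity :
    (Units.map (algebraMap K L : K →* L)).range = rootsOfUnity (Nat.card K - 1) L := by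
  have hinj : Function.Injective (Units.map (algebraMap K L : K →* L)) :=
    Units.map_injective (algebraMap K L).injective
  have : NeZero (Nat.card K - 1) := ⟨by have := Finite.one_lt_card (α := K); omega⟩
  refine Subgroup.eq_of_le_of_card_ge ?_ ?_
  · rintro _ ⟨u, rfl⟩
    rw [mem_rootsOfUnity, ← map_pow, ← Nat.card_units, pow_card_eq_one', map_one]
  · rw [← Nat.card_congr (MonoidHom.ofInjective hinj).toEquiv, Nat.card_units]
    exact card_rootsOfUnity _ _

theorem exists_algebraMap_eq_iff_pow_card_sub_one_eq_one {x : L} (hx : x ≠ 0) :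
    (∃ c : K, algebraMap K L c = x) ↔ x ^ (Nat.card K - 1) = 1 := by
  rw [← Units.val_mk0 hx, ← mem_rootsOfUnity', ← range_unitsMap_algebraMap_eq_rootsOfUnity]
  constructor
  · rintro ⟨c, hc⟩
    have hc0 : c ≠ 0 := by rintro rfl; exact hx (by simpa using hc.symm)
    exact ⟨Units.mk0 c hc0, Units.ext hc⟩
  · rintro ⟨u, hu⟩
    exact ⟨u, congrArg Units.val hu⟩

theorem exists_algebraMap_eq_pow_and_pow_add_iff {γ : L} (hγ : γ ≠ 0) (a b : ℕ) :
    (∃ c : K, γ ^ a = algebraMap K L c ∧ γ ^ (a + b) = algebraMap K L c) ↔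
      orderOf γ ∣ a * (Nat.card K - 1) ∧ orderOf γ ∣ b := by
  simp only [orderOf_dvd_iff_pow_eq_one, pow_mul, pow_add]
  rw [← exists_algebraMap_eq_iff_pow_card_sub_one_eq_one (pow_ne_zero a hγ)]
  constructor
  · rintro ⟨c, hc, hcb⟩
    exact ⟨⟨c, hc.symm⟩, (mul_eq_left₀ (pow_ne_zero a hγ)).mp (hcb.trans hc.symm)⟩
  · rintro ⟨⟨c, hc⟩, hb⟩
    exact ⟨c, hc.symm, by rw [hb, mul_one, hc]⟩

theorem exists_algebraMap_eq_pow_and_pow_add_iff_dvd {γ : L} {M D d e : ℕ}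
    (hγ : 0 < orderOf γ) (hM : M * (Nat.card K - 1) = orderOf γ) (hD : D * e = orderOf γ)
    (m : ℕ) :
    (∃ c : K, γ ^ (d * m) = algebraMap K L c ∧ γ ^ ((d + D) * m) = algebraMap K L c) ↔
      M * e / Nat.gcd M (d * e) ∣ m := by
  rw [← Nat.dvd_mul_and_dvd_iff_mul_div_gcd_dvd (Nat.pos_of_mul_pos_right (hM ▸ hγ))
      (Nat.pos_of_mul_pos_left (hD ▸ hγ)), add_mul,
    exists_algebraMap_eq_pow_and_pow_add_iff (by rintro rfl; simp at hγ)]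
  refine and_congr ?_ ?_
  · rw [← hM, Nat.mul_dvd_mul_iff_right (Nat.pos_of_mul_pos_left (hM ▸ hγ))]
  · rw [← hD, Nat.mul_dvd_mul_iff_left (Nat.pos_of_mul_pos_right (hD ▸ hγ))]

end FiniteSubfield

theorem number_of_weight_two_dual_words_general
    (q n k d e D lam f : ℕ)
    (Fq Fqk : Type) [Field Fq] [Field Fqk] [Fintype Fq] [Fintype Fqk]
    [Algebra Fq Fqk]
    (hq : Fintype.card Fq = q)
    (hqk : Fintype.card Fqk = q ^ k)
    (hde : d * e ∣ q - 1)
    (hD : D = (q ^ k - 1) / e)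
    (hdn : q ^ k - 1 ∣ d * n)
    (hlam : lam = d * n / (q ^ k - 1))
    (hf : f = Nat.gcd ((q ^ k - 1) / (q - 1)) (d * e))
    (γ : Fqkˣ) (hγ : ∀ x : Fqkˣ, x ∈ Subgroup.zpowers γ) :
    Nat.card {m : ℕ // 1 ≤ m ∧ m ≤ n - 1 ∧ ∃ c : Fq,
        ((γ : Fqk)) ^ (d * m) = algebraMap Fq Fqk c ∧
        ((γ : Fqk)) ^ ((d + D) * m) = algebraMap Fq Fqk c}
      = lam * f * (q - 1) / (d * e) - 1 ∧
    Nat.card {p : ℕ × Fq // 1 ≤ p.1 ∧ p.1 ≤ n - 1 ∧ p.2 ≠ 0 ∧ ∃ c : Fq,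
        ((γ : Fqk)) ^ (d * p.1) = algebraMap Fq Fqk c ∧
        ((γ : Fqk)) ^ ((d + D) * p.1) = algebraMap Fq Fqk c}
      = (lam * f * (q - 1) / (d * e) - 1) * (q - 1) := by
  subst hf
  have hq' : Nat.card Fq = q := Nat.card_eq_fintype_card.trans hq
  have hde0 : 0 < d * e := 
    Nat.pos_of_dvd_of_pos hde (Nat.sub_pos_of_lt (hq ▸ Fintype.one_lt_card))
  have hord : orderOf (γ : Fqk) = q ^ k - 1 := by
    rw [orderOf_units, orderOf_eq_card_of_forall_mem_zpowers hγ, Nat.card_units,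
      Nat.card_eq_fintype_card, hqk]
  have hord0 : 0 < orderOf (γ : Fqk) := by rw [orderOf_units]; exact orderOf_pos γ
  set M := (q ^ k - 1) / (q - 1)
  have hM : M * (q - 1) = q ^ k - 1 :=
    Nat.div_mul_cancel (by simpa using Nat.sub_dvd_pow_sub_pow q 1 k)
  have hM0 : 0 < M := Nat.pos_of_mul_pos_right (hM ▸ hord ▸ hord0)
  have hDe : D * e = q ^ k - 1 := by
    rw [hD, Nat.div_mul_cancel (((dvd_mul_left e d).trans hde).trans ⟨M, by rw [mul_comm, hM]⟩)]
  set T := lam * Nat.gcd M (d * e) * (q - 1) / (d * e)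
  have hn : n = M * e / Nat.gcd M (d * e) * T := by
    refine (Nat.div_mul_div_eq_of_mul_eq (Nat.gcd_dvd_left _ _) (Nat.gcd_pos_of_pos_left _ hM0)
      hde hde0 ?_).symm
    rw [hM, hlam, Nat.div_mul_cancel hdn]
  have hcount : Nat.card {m : ℕ // 1 ≤ m ∧ m ≤ n - 1 ∧ ∃ c : Fq,
      ((γ : Fqk)) ^ (d * m) = algebraMap Fq Fqk c ∧
      ((γ : Fqk)) ^ ((d + D) * m) = algebraMap Fq Fqk c} = T - 1 := by
    rw [← Nat.card_multiples_le_mul_sub_one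
      (Nat.mul_div_gcd_pos (d := d) hM0 (Nat.pos_of_mul_pos_left hde0)) T, ← hn]
    refine Nat.card_congr (Equiv.subtypeEquivRight fun m => ?_)
    rw [exists_algebraMap_eq_pow_and_pow_add_iff_dvd hord0 (hq' ▸ hM.trans hord.symm)
      (hDe.trans hord.symm)]
  refine ⟨hcount, ?_⟩
  rw [← hcount, ← hq', ← Nat.card_units, Nat.card_congr unitsEquivNeZero, ← Nat.card_prod]
  exact Nat.card_congr
    ((Equiv.subtypeEquivRight fun p => by tauto).trans Equiv.subtypeProdEquivProd)

/-- The number of integers `1 ≤ m ≤ n-1` for which some `c ∈ 𝔽_q` satisfies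
`γ^(dm) = c` and `γ^((d+D)m) = c` equals `λf(q-1)/(de) - 1`; consequently the
number `B₂` of weight-2 words of the dual code `C⊥` (binomials `a x^m - b`
vanishing at `γ^d` and `γ^(d+D)`) equals `(λf(q-1)/(de) - 1)(q-1)`. -/
theorem number_of_weight_two_dual_words
    (q n k d e D lam f : ℕ)
    (Fq Fqk : Type) [Field Fq] [Field Fqk] [Fintype Fq] [Fintype Fqk]
    [Algebra Fq Fqk]
    (hq : Fintype.card Fq = q)
    (hqk : Fintype.card Fqk = q ^ k)
    (hn : 3 ≤ n) (hnq : Nat.Coprime n q)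
    (hk : k = orderOf (q : ZMod n))
    (hd : 0 < d) (he : 1 < e)
    (hde : d * e ∣ q - 1)
    (hD : D = (q ^ k - 1) / e)
    (hdn : q ^ k - 1 ∣ d * n)
    (hlam : lam = d * n / (q ^ k - 1))
    (hf : f = Nat.gcd ((q ^ k - 1) / (q - 1)) (d * e))
    (γ : Fqkˣ) (hγ : ∀ x : Fqkˣ, x ∈ Subgroup.zpowers γ) :
    Nat.card {m : ℕ // 1 ≤ m ∧ m ≤ n - 1 ∧ ∃ c : Fq,
        ((γ : Fqk)) ^ (d * m) = algebraMap Fq Fqk c ∧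
        ((γ : Fqk)) ^ ((d + D) * m) = algebraMap Fq Fqk c}
      = lam * f * (q - 1) / (d * e) - 1 ∧
    Nat.card {p : ℕ × Fq // 1 ≤ p.1 ∧ p.1 ≤ n - 1 ∧ p.2 ≠ 0 ∧ ∃ c : Fq,
        ((γ : Fqk)) ^ (d * p.1) = algebraMap Fq Fqk c ∧
        ((γ : Fqk)) ^ ((d + D) * p.1) = algebraMap Fq Fqk c}
      = (lam * f * (q - 1) / (d * e) - 1) * (q - 1) :=
  number_of_weight_two_dual_words_general q n k d e D lam f Fq Fqk hq hqk hde hD hdn hlam hf γ hγ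
end

section
/- Assume additionally that $de = q-1$, $\lambda = 1$ and $f = 1$. Then the number of integers $r$ with $1 \le r \le n-1$ such that $\gamma^{dr} \in \mathbb{F}_q$ equals $\dfrac{q-1}{d} - 1$; equivalently, the number of codewords of Hamming weight $2$ in the dual code of $C_d$ is $\big(\frac{q-1}{d} - 1\big)(q-1)$. -/
/-!
Since `γ` generates `𝔽_{q^k}ˣ`, a power `γ ^ j` lies in `𝔽_q` exactly when
`(γ ^ j) ^ (q - 1) = 1`, i.e. when `q ^ k - 1 ∣ j (q - 1)`. With `q ^ k - 1 = d n` (`λ = 1`),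
`q - 1 = d e` and `n = e m`, the quotient `(q ^ k - 1) / (q - 1)` is `m`, which is coprime to `d`
because `f = 1`; hence `γ ^ (d r) ∈ 𝔽_q` iff `m ∣ r`. The multiples of `m` in `[1, e m - 1]` are
`m, 2m, …, (e - 1) m`, and each of them pairs with the `q - 1` nonzero coefficients.
-/

open Polynomial

section FiniteFieldExtension

variable {K L : Type*} [Field K] [Fintype K]

-- The `card K - 1` nonzero elements of `K` are roots of `X ^ (card K - 1) - 1`, hence all of them.
theorem mem_range_algebraMap_of_pow_card_sub_one_eq_one [CommRing L] [IsDomain L] [Algebra K L]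
    {x : L} (hx : x ^ (Fintype.card K - 1) = 1) : x ∈ Set.range (algebraMap K L) := by
  classical
  have hpos : 0 < Fintype.card K - 1 := Nat.sub_pos_of_lt Fintype.one_lt_card
  have hsub : (Finset.univ.erase (0 : K)).image (algebraMap K L) ⊆
      nthRootsFinset (Fintype.card K - 1) (1 : L) := by
    intro y hy
    obtain ⟨c, hc, rfl⟩ := Finset.mem_image.mp hy
    rw [mem_nthRootsFinset hpos, ← map_pow,
      FiniteField.pow_card_sub_one_eq_one c (Finset.ne_of_mem_erase hc), map_one]
  have hcard : (nthRootsFinset (Fintype.card K - 1) (1 : L)).card ≤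
      ((Finset.univ.erase (0 : K)).image (algebraMap K L)).card := by
    rw [Finset.card_image_of_injective _ (algebraMap K L).injective,
      Finset.card_erase_of_mem (Finset.mem_univ _), Finset.card_univ, nthRootsFinset_def]
    exact (Multiset.toFinset_card_le _).trans (card_nthRoots _ _)
  rw [← mem_nthRootsFinset hpos, ← Finset.eq_of_subset_of_card_le hsub hcard] at hx
  obtain ⟨c, -, hc⟩ := Finset.mem_image.mp hx
  exact ⟨c, hc⟩

theorem exists_algebraMap_eq_pow_iff_dvd [Field L] [Fintype L] [Algebra K L] {γ : Lˣ}
    (hγ : ∀ x, x ∈ Subgroup.zpowers γ) (j : ℕ) :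
    (∃ c : K, (γ : L) ^ j = algebraMap K L c) ↔
      Fintype.card L - 1 ∣ j * (Fintype.card K - 1) := by
  rw [← Nat.card_eq_fintype_card (α := L), ← Nat.card_units,
    ← orderOf_eq_card_of_forall_mem_zpowers hγ, orderOf_dvd_iff_pow_eq_one, pow_mul,
    ← Units.val_eq_one, Units.val_pow_eq_pow_val, Units.val_pow_eq_pow_val]
  constructor
  · rintro ⟨c, hc⟩
    have hc0 : c ≠ 0 := by
      rintro rfl
      exact pow_ne_zero j γ.ne_zero (hc.trans (map_zero _))
    rw [hc, ← map_pow, FiniteField.pow_card_sub_one_eq_one c hc0, map_one]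
  · intro h
    obtain ⟨c, hc⟩ := mem_range_algebraMap_of_pow_card_sub_one_eq_one h
    exact ⟨c, hc.symm⟩

end FiniteFieldExtension

theorem Nat.card_multiples_Icc_one (N m : ℕ) :
    Nat.card {r : ℕ // 1 ≤ r ∧ r ≤ N ∧ m ∣ r} = N / m := by
  rw [← Nat.Ioc_filter_dvd_card_eq_div, ← Nat.card_eq_finsetCard]
  refine Nat.card_congr (Equiv.subtypeEquivRight fun r => ?_)
  simp only [Finset.mem_filter, Finset.mem_Ioc]
  omega

theorem Nat.mul_sub_one_div (a : ℕ) {b : ℕ} (hb : 0 < b) : (a * b - 1) / b = a - 1 := by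
  rcases a with _ | a
  · simp
  · have hab : 0 < (a + 1) * b := by positivity
    exact Nat.div_eq_of_lt_le (by rw [Nat.add_sub_cancel, Nat.add_one_mul]; omega)
      (by rw [Nat.add_sub_cancel]; omega)

theorem number_of_weight_two_dual_words_Cd_general
    (q n k d e lam f : ℕ)
    (Fq Fqk : Type) [Field Fq] [Field Fqk] [Fintype Fq] [Fintype Fqk]
    [Algebra Fq Fqk]
    (hq : Fintype.card Fq = q)
    (hqk : Fintype.card Fqk = q ^ k)
    (hd : 0 < d)
    (hdn : q ^ k - 1 ∣ d * n)
    (hlam : lam = d * n / (q ^ k - 1))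
    (hf : f = Nat.gcd ((q ^ k - 1) / (q - 1)) (d * e))
    (hde' : d * e = q - 1) (hlam1 : lam = 1) (hf1 : f = 1)
    (γ : Fqkˣ) (hγ : ∀ x : Fqkˣ, x ∈ Subgroup.zpowers γ) :
    Nat.card {r : ℕ // 1 ≤ r ∧ r ≤ n - 1 ∧ ∃ c : Fq,
        ((γ : Fqk)) ^ (d * r) = algebraMap Fq Fqk c}
      = (q - 1) / d - 1 ∧
    Nat.card {p : ℕ × Fq // 1 ≤ p.1 ∧ p.1 ≤ n - 1 ∧ p.2 ≠ 0 ∧ ∃ c : Fq,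
        ((γ : Fqk)) ^ (d * p.1) = algebraMap Fq Fqk c}
      = ((q - 1) / d - 1) * (q - 1) := by
  have hN : q ^ k - 1 = d * n := Nat.eq_of_dvd_of_div_eq_one hdn (hlam ▸ hlam1)
  obtain ⟨m, rfl⟩ : e ∣ n := Nat.dvd_of_mul_dvd_mul_left hd <| by
    rw [hde', ← hN]; exact Nat.sub_one_dvd_pow_sub_one q k
  have hde_pos : 0 < d * e := hde' ▸ Nat.sub_pos_of_lt (hq ▸ Fintype.one_lt_card)
  have hm : 0 < m := Nat.pos_of_ne_zero fun hm0 => by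
    have := hqk ▸ Fintype.one_lt_card (α := Fqk)
    simp only [hm0, mul_zero] at hN
    omega
  have hcop : m.Coprime d := by
    rw [hf1, hN, ← hde', ← mul_assoc, Nat.mul_div_cancel_left m hde_pos] at hf
    exact Nat.Coprime.coprime_mul_right_right hf.symm
  have hpow_mem_iff :
      ∀ r, (∃ c : Fq, (γ : Fqk) ^ (d * r) = algebraMap Fq Fqk c) ↔ m ∣ r := fun r => by
    rw [exists_algebraMap_eq_pow_iff_dvd hγ, hqk, hq, hN, ← hde',
      show d * (e * m) = d * e * m by ring, show d * r * (d * e) = d * e * (d * r) by ring,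
      Nat.mul_dvd_mul_iff_left hde_pos, hcop.dvd_mul_left]
  have hcount : Nat.card {r : ℕ // 1 ≤ r ∧ r ≤ e * m - 1 ∧ m ∣ r} = (q - 1) / d - 1 := by
    rw [Nat.card_multiples_Icc_one, Nat.mul_sub_one_div e hm, ← hde',
      Nat.mul_div_cancel_left e hd]
  simp only [hpow_mem_iff]
  refine ⟨hcount, ?_⟩
  calc _ = Nat.card ({r : ℕ // 1 ≤ r ∧ r ≤ e * m - 1 ∧ m ∣ r} × {c : Fq // c ≠ 0}) :=
        Nat.card_congr ((Equiv.subtypeEquivRight fun _ => by tauto).trans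
          Equiv.subtypeProdEquivProd)
    _ = _ := by
      rw [Nat.card_prod, hcount, ← Nat.card_congr unitsEquivNeZero, Nat.card_units,
        Nat.card_eq_fintype_card, hq]

/-- Assume `de = q-1`, `λ = 1`, `f = 1`. Then the number of integers `1 ≤ r ≤ n-1`
with `γ^(dr) ∈ 𝔽_q` is `(q-1)/d - 1`; equivalently, the number of weight-2 words
in the dual code of `C_d` is `((q-1)/d - 1)(q-1)`. -/
theorem number_of_weight_two_dual_words_Cd
    (q n k d e D lam f : ℕ)
    (Fq Fqk : Type) [Field Fq] [Field Fqk] [Fintype Fq] [Fintype Fqk]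
    [Algebra Fq Fqk]
    (hq : Fintype.card Fq = q)
    (hqk : Fintype.card Fqk = q ^ k)
    (hn : 3 ≤ n) (hnq : Nat.Coprime n q)
    (hk : k = orderOf (q : ZMod n))
    (hd : 0 < d) (he : 1 < e)
    (hde : d * e ∣ q - 1)
    (hD : D = (q ^ k - 1) / e)
    (hdn : q ^ k - 1 ∣ d * n)
    (hlam : lam = d * n / (q ^ k - 1))
    (hf : f = Nat.gcd ((q ^ k - 1) / (q - 1)) (d * e))
    (hde' : d * e = q - 1) (hlam1 : lam = 1) (hf1 : f = 1)
    (γ : Fqkˣ) (hγ : ∀ x : Fqkˣ, x ∈ Subgroup.zpowers γ) :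
    Nat.card {r : ℕ // 1 ≤ r ∧ r ≤ n - 1 ∧ ∃ c : Fq,
        ((γ : Fqk)) ^ (d * r) = algebraMap Fq Fqk c}
      = (q - 1) / d - 1 ∧
    Nat.card {p : ℕ × Fq // 1 ≤ p.1 ∧ p.1 ≤ n - 1 ∧ p.2 ≠ 0 ∧ ∃ c : Fq,
        ((γ : Fqk)) ^ (d * p.1) = algebraMap Fq Fqk c}
      = ((q - 1) / d - 1) * (q - 1) :=
  number_of_weight_two_dual_words_Cd_general q n k d e lam f Fq Fqk hq hqk hd hdn hlam hf hde' hlam1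
    hf1 γ hγ
end

section
/- If there is a value $w$ such that every codeword $c_u$ with $u \ne 0$ has Hamming weight $w$ (i.e. the code $C_d$ is a one-weight code), then $w \cdot (q^k - 1) = n (q-1) q^{k-1}$; in particular $w = \mu q^{k-1}$ where $\mu = \lambda(q-1)/d$ divides $q-1$. -/
/-!
Double count the pairs `(u, i)` with `Tr(u β^(di)) ≠ 0`. For each coordinate `i`, the map
`u ↦ Tr(u β^(di))` is a surjective `𝔽_q`-linear functional, so it is nonzero on
`(q - 1) q^(k-1)` elements `u`; for a one-weight code the same count is `(q^k - 1) w`.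
Since `q^k - 1` is prime to `q`, it divides `n (q - 1)`, and the quotient `μ` divides `q - 1`
because `n ∣ q^k - 1`, `k` being the order of `q` modulo `n`.
-/

open Finset

theorem AddMonoidHom.card_filter_ne_zero_mul_card {G H : Type*} [AddGroup G] [AddGroup H]
    [Fintype G] [Fintype H] [DecidableEq H] (f : G →+ H) (hf : Function.Surjective f) :
    #{g | f g ≠ 0} * Fintype.card H = (Fintype.card H - 1) * Fintype.card G := by
  have hker : Nat.card f.ker * Fintype.card H = Fintype.card G := by
    rw [← Nat.card_eq_fintype_card (α := H), ← Nat.card_eq_fintype_card (α := G),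
      ← f.ker.card_mul_index, AddSubgroup.index_ker, f.range_eq_top_of_surjective hf,
      AddSubgroup.card_top]
  have hsplit : #{g | f g ≠ 0} + Nat.card f.ker = Fintype.card G := by
    rw [← card_univ, ← card_filter_add_card_filter_not (s := univ) (fun g => f g ≠ 0)]
    simp [Nat.card_eq_fintype_card, Fintype.card_subtype, AddMonoidHom.mem_ker]
  have hH : 1 ≤ Fintype.card H := Fintype.card_pos
  zify [hH] at hker hsplit ⊢
  linear_combination (Fintype.card H : ℤ) * hsplit - hker

theorem card_trace_mul_ne_zero_mul_card {K L : Type*} [Field K] [Field L] [Fintype K] [Fintype L]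
    [DecidableEq K] [Algebra K L] {c : L} (hc : c ≠ 0) :
    #{u : L | Algebra.trace K L (u * c) ≠ 0} * Fintype.card K
      = (Fintype.card K - 1) * Fintype.card L := by
  refine ((Algebra.trace K L).toAddMonoidHom.comp (AddMonoidHom.mulRight c))
    |>.card_filter_ne_zero_mul_card ?_
  exact (Algebra.trace_surjective K L).comp fun v => ⟨v * c⁻¹, by simp [hc]⟩

theorem sum_hammingNorm_eq_sum_card_ne_zero {α ι β : Type*} [Fintype α] [Fintype ι] [Zero β]
    [DecidableEq β] (x : α → ι → β) :
    ∑ a, hammingNorm (x a) = ∑ i, #{a | x a i ≠ 0} := by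
  simp only [hammingNorm, card_filter]
  exact sum_comm

theorem sum_hammingNorm_eq_of_forall_ne_zero {α ι β : Type*} [Fintype α] [DecidableEq α]
    [Zero α] [Fintype ι] [Zero β] [DecidableEq β] {x : α → ι → β} (h0 : x 0 = 0) {w : ℕ}
    (hw : ∀ a, a ≠ 0 → hammingNorm (x a) = w) :
    ∑ a, hammingNorm (x a) = (Fintype.card α - 1) * w := by
  rw [← add_sum_erase _ _ (mem_univ 0), h0, hammingNorm_zero, zero_add,
    sum_congr rfl fun a ha => hw a (ne_of_mem_erase ha), sum_const, card_erase_of_mem (mem_univ _),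
    card_univ, smul_eq_mul]

theorem sum_hammingNorm_trace_mul_mul_card {K L ι : Type*} [Field K] [Field L] [Fintype K]
    [Fintype L] [DecidableEq K] [Algebra K L] [Fintype ι] {c : ι → L} (hc : ∀ i, c i ≠ 0) :
    (∑ u : L, hammingNorm fun i => Algebra.trace K L (u * c i)) * Fintype.card K
      = Fintype.card ι * (Fintype.card K - 1) * Fintype.card L := by
  rw [sum_hammingNorm_eq_sum_card_ne_zero, sum_mul,
    sum_congr rfl fun i _ => card_trace_mul_ne_zero_mul_card (hc i), sum_const, card_univ,
    smul_eq_mul, mul_assoc]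

theorem Nat.dvd_pow_orderOf_sub_one {n q : ℕ} (hq : 0 < q) :
    n ∣ q ^ orderOf (q : ZMod n) - 1 := by
  rw [← ZMod.natCast_eq_zero_iff, Nat.cast_sub (Nat.one_le_pow _ _ hq)]
  push_cast
  rw [pow_orderOf_eq_one, sub_self]

theorem Nat.exists_eq_mul_of_mul_eq_mul_of_coprime {Q N r w : ℕ} (hQ : 0 < Q) (hQr : Q.Coprime r)
    (h : w * Q = N * r) : ∃ μ, N = Q * μ ∧ w = μ * r := by
  obtain ⟨μ, rfl⟩ : Q ∣ N := hQr.dvd_of_dvd_mul_right ⟨w, by rw [← h, mul_comm]⟩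
  exact ⟨μ, rfl, Nat.eq_of_mul_eq_mul_right hQ (by rw [h]; ring)⟩

theorem one_weight_subcode_weight_general
    (q n k d lam w : ℕ)
    (Fq Fqk : Type) [Field Fq] [Field Fqk] [Fintype Fq] [Fintype Fqk]
    [DecidableEq Fq] [Algebra Fq Fqk]
    (hq : Fintype.card Fq = q)
    (hqk : Fintype.card Fqk = q ^ k)
    (hk : k = orderOf (q : ZMod n))
    (hdn : q ^ k - 1 ∣ d * n)
    (hlam : lam = d * n / (q ^ k - 1))
    (γ : Fqkˣ)
    (hw : ∀ u : Fqk, u ≠ 0 →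
      hammingNorm (fun i : Fin n =>
        Algebra.trace Fq Fqk (u * ((γ⁻¹ : Fqkˣ) : Fqk) ^ (d * (i : ℕ)))) = w) :
    w * (q ^ k - 1) = n * (q - 1) * q ^ (k - 1) ∧
    ∃ μ : ℕ, μ * d = lam * (q - 1) ∧ w = μ * q ^ (k - 1) ∧ μ ∣ (q - 1) := by
  classical
  have hq1 : 1 < q := hq ▸ Fintype.one_lt_card
  have hQ : 1 < q ^ k := hqk ▸ Fintype.one_lt_card
  have hk0 : k ≠ 0 := by rintro rfl; simp at hQ
  have htotal := sum_hammingNorm_trace_mul_mul_card (K := Fq) (L := Fqk)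
    (c := fun i : Fin n => ((γ⁻¹ : Fqkˣ) : Fqk) ^ (d * (i : ℕ))) fun i => by simp
  rw [sum_hammingNorm_eq_of_forall_ne_zero (by ext; simp) hw, hq, hqk, Fintype.card_fin] at htotal
  have hweight : w * (q ^ k - 1) = n * (q - 1) * q ^ (k - 1) := by
    refine Nat.eq_of_mul_eq_mul_right (show 0 < q by omega) ?_
    rw [mul_assoc _ (q ^ (k - 1)), pow_sub_one_mul hk0, ← htotal]
    ring
  refine ⟨hweight, ?_⟩
  have hcop : (q ^ k - 1).Coprime (q ^ (k - 1)) :=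
    ((Nat.coprime_self_sub_left hQ.le).mpr (Nat.coprime_one_left _)).coprime_dvd_right
      (pow_dvd_pow q (Nat.sub_le k 1))
  obtain ⟨μ, hμ, rfl⟩ := Nat.exists_eq_mul_of_mul_eq_mul_of_coprime (by omega) hcop hweight
  obtain ⟨m, hm⟩ : n ∣ q ^ k - 1 := hk ▸ Nat.dvd_pow_orderOf_sub_one (by omega)
  have hlam' : lam * (q ^ k - 1) = d * n := hlam ▸ Nat.div_mul_cancel hdn
  refine ⟨μ, Nat.eq_of_mul_eq_mul_right (by omega : 0 < q ^ k - 1) ?_, rfl, m, ?_⟩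
  · rw [mul_right_comm lam, hlam', mul_right_comm μ d, mul_comm μ, ← hμ]
    ring
  · have hn : 0 < n := Nat.pos_of_ne_zero (by rintro rfl; omega)
    exact Nat.eq_of_mul_eq_mul_left hn (by rw [hμ, hm]; ring)

/-- If every nonzero codeword `c_u` of `C_d` has the same Hamming weight `w`,
then `w(q^k - 1) = n(q-1)q^(k-1)`; in particular `w = μ q^(k-1)` where
`μ = λ(q-1)/d` divides `q-1`. -/
theorem one_weight_subcode_weight
    (q n k d e lam w : ℕ)
    (Fq Fqk : Type) [Field Fq] [Field Fqk] [Fintype Fq] [Fintype Fqk]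
    [DecidableEq Fq] [Algebra Fq Fqk]
    (hq : Fintype.card Fq = q)
    (hqk : Fintype.card Fqk = q ^ k)
    (hn : 3 ≤ n) (hnq : Nat.Coprime n q)
    (hk : k = orderOf (q : ZMod n))
    (hd : 0 < d) (he : 1 < e)
    (hde : d * e ∣ q - 1)
    (hdn : q ^ k - 1 ∣ d * n)
    (hlam : lam = d * n / (q ^ k - 1))
    (γ : Fqkˣ) (hγ : ∀ x : Fqkˣ, x ∈ Subgroup.zpowers γ)
    (hw : ∀ u : Fqk, u ≠ 0 →
      hammingNorm (fun i : Fin n =>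
        Algebra.trace Fq Fqk (u * ((γ⁻¹ : Fqkˣ) : Fqk) ^ (d * (i : ℕ)))) = w) :
    w * (q ^ k - 1) = n * (q - 1) * q ^ (k - 1) ∧
    ∃ μ : ℕ, μ * d = lam * (q - 1) ∧ w = μ * q ^ (k - 1) ∧ μ ∣ (q - 1) :=
  one_weight_subcode_weight_general q n k d lam w Fq Fqk hq hqk hk hdn hlam γ hw
end

section
/- If the code $C$ is a two-weight code with distinct nonzero Hamming weights $w_1$ and $w_2$, then $q^{2k-2}$ divides the product $w_1 w_2$. -/
/-!
The code is the image of the `𝔽_q`-linear map `G : 𝔽_{q^k}² → 𝔽_qⁿ`, `(u, v) ↦ c_{u,v}`,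
on a space of dimension `m = 2k`. Summing `(wt x - w₁)(wt x - w₂)` over the whole domain
leaves only the term `w₁ w₂` at `x = 0`; expanding it gives
`w₁ w₂ (q^m - 1) = (w₁ + w₂) S₁ - S₂` with `Sⱼ = ∑ₓ (wt x)ʲ`. Each `Sⱼ` is a sum, over pairs
of coordinates, of counts `#{x | (Gᵢ x, Gⱼ x) ∈ t}`; such a set is a union of cosets of a
kernel of codimension at most `2`, so its size is divisible by `q^(m-2)`. Since `q^(m-2)` is
coprime to `q^m - 1`, it divides `w₁ w₂`.
-/

open Finset

section
variable {α ι R : Type*} [Fintype α] [Fintype ι] [Zero R] [DecidableEq R]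

theorem sum_hammingNorm (c : α → ι → R) :
    ∑ a, hammingNorm (c a) = ∑ i, #{a | c a i ≠ 0} := by
  simp only [hammingNorm, card_filter]
  exact sum_comm

theorem sum_hammingNorm_sq (c : α → ι → R) :
    ∑ a, hammingNorm (c a) ^ 2 = ∑ i, ∑ j, #{a | c a i ≠ 0 ∧ c a j ≠ 0} := by
  simp only [hammingNorm, card_filter, sq, sum_mul_sum, ite_zero_mul_ite_zero, mul_one]
  rw [sum_comm]
  exact sum_congr rfl fun i _ => sum_comm
end

theorem AddMonoidHom.card_ker_dvd_card_filter_mem {G M : Type*} [AddGroup G] [Fintype G]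
    [AddMonoid M] [DecidableEq M] (φ : G →+ M) (t : Finset M) :
    #{g | φ g = 0} ∣ #{g | φ g ∈ t} := by
  rw [← sum_card_fiberwise_eq_card_filter]
  refine dvd_sum fun y _ => ?_
  by_cases hy : y ∈ Set.range φ
  · rw [AddMonoidHom.card_fiber_eq_of_mem_range φ hy ⟨0, map_zero φ⟩]
  · rw [filter_false_of_mem fun g _ hg => hy ⟨g, hg⟩, card_empty]
    exact dvd_zero _

theorem LinearMap.pow_finrank_sub_dvd_card_filter_mem {K V W : Type*} [Field K] [Fintype K]
    [AddCommGroup V] [Module K V] [Fintype V] [AddCommGroup W] [Module K W]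
    [FiniteDimensional K W] [DecidableEq W] (φ : V →ₗ[K] W) (t : Finset W) :
    Fintype.card K ^ (Module.finrank K V - Module.finrank K W) ∣ #{v | φ v ∈ t} := by
  classical
  refine dvd_trans ?_ (φ.toAddMonoidHom.card_ker_dvd_card_filter_mem t)
  have hker : #{v | φ v = 0} = Fintype.card K ^ Module.finrank K (LinearMap.ker φ) := by
    rw [← Module.card_eq_pow_finrank (K := K) (V := LinearMap.ker φ), ← Fintype.card_subtype]
    exact Fintype.card_congr (Equiv.subtypeEquivRight fun v => LinearMap.mem_ker.symm)
  have hrank := φ.finrank_range_add_finrank_ker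
  have hle := (LinearMap.range φ).finrank_le
  exact hker ▸ pow_dvd_pow _ (by omega)

section
variable {K V ι : Type*} [Field K] [Fintype K] [DecidableEq K] [AddCommGroup V] [Module K V]
  [Fintype V] [Fintype ι]

theorem LinearMap.pow_finrank_sub_two_dvd_sum_hammingNorm (G : V →ₗ[K] ι → K) :
    Fintype.card K ^ (Module.finrank K V - 2) ∣ ∑ v, hammingNorm (G v) := by
  rw [sum_hammingNorm]
  refine dvd_sum fun i _ => ?_
  have h := (LinearMap.proj i ∘ₗ G).pow_finrank_sub_dvd_card_filter_mem {0}ᶜ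
  rw [Module.finrank_self] at h
  exact (pow_dvd_pow _ (Nat.sub_le_sub_left one_le_two _)).trans (by simpa using h)

theorem LinearMap.pow_finrank_sub_two_dvd_sum_hammingNorm_sq (G : V →ₗ[K] ι → K) :
    Fintype.card K ^ (Module.finrank K V - 2) ∣ ∑ v, hammingNorm (G v) ^ 2 := by
  rw [sum_hammingNorm_sq]
  refine dvd_sum fun i _ => dvd_sum fun j _ => ?_
  have h := ((LinearMap.proj i ∘ₗ G).prod
    (LinearMap.proj j ∘ₗ G)).pow_finrank_sub_dvd_card_filter_mem {y | y.1 ≠ 0 ∧ y.2 ≠ 0}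
  simpa using h

theorem LinearMap.pow_finrank_sub_two_dvd_mul_of_hammingNorm_eq_or_eq (G : V →ₗ[K] ι → K)
    {w₁ w₂ : ℕ} (hG : ∀ v ≠ 0, hammingNorm (G v) = w₁ ∨ hammingNorm (G v) = w₂) :
    Fintype.card K ^ (Module.finrank K V - 2) ∣ w₁ * w₂ := by
  set q := Fintype.card K
  set m := Module.finrank K V
  have hsum :
      ∑ v, ((hammingNorm (G v) : ℤ) - w₁) * ((hammingNorm (G v) : ℤ) - w₂) = w₁ * w₂ := by
    rw [Fintype.sum_eq_single 0 fun v hv => by rcases hG v hv with h | h <;> simp [h]]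
    simp
  have hcard : Fintype.card V = q ^ m := Module.card_eq_pow_finrank
  have key : (w₁ * w₂ : ℤ) * ((q : ℤ) ^ m - 1)
      = (w₁ + w₂) * ((∑ v, hammingNorm (G v) : ℕ) : ℤ)
        - ((∑ v, hammingNorm (G v) ^ 2 : ℕ) : ℤ) := by
    simp only [sub_mul, mul_sub, sum_sub_distrib, ← sum_mul, ← mul_sum, sum_const, card_univ,
      hcard, nsmul_eq_mul] at hsum
    push_cast [sq] at hsum ⊢
    linear_combination hsum
  have hdvd : (q : ℤ) ^ (m - 2) ∣ (w₁ * w₂ : ℤ) * ((q : ℤ) ^ m - 1) := by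
    have h₁ := G.pow_finrank_sub_two_dvd_sum_hammingNorm
    have h₂ := G.pow_finrank_sub_two_dvd_sum_hammingNorm_sq
    rw [key]
    exact dvd_sub (dvd_mul_of_dvd_right (by exact_mod_cast h₁) _) (by exact_mod_cast h₂)
  have hcop : IsCoprime ((q : ℤ) ^ (m - 2)) ((q : ℤ) ^ m - 1) :=
    IsCoprime.of_isCoprime_of_dvd_left ⟨1, -1, by ring⟩ (pow_dvd_pow _ (by omega))
  exact_mod_cast hcop.dvd_of_dvd_mul_right hdvd
end

noncomputable def traceCode (R S : Type*) [CommRing R] [CommRing S] [Algebra R S]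
    (n a b : ℕ) (β : S) : S × S →ₗ[R] Fin n → R :=
  LinearMap.pi fun i => Algebra.trace R S ∘ₗ
    (LinearMap.mulRight R (β ^ (a * i)) ∘ₗ LinearMap.fst R S S +
      LinearMap.mulRight R (β ^ (b * i)) ∘ₗ LinearMap.snd R S S)

theorem q_pow_divides_weight_product_general
    (q n k d D w₁ w₂ : ℕ)
    (Fq Fqk : Type) [Field Fq] [Field Fqk] [Fintype Fq] [Fintype Fqk]
    [DecidableEq Fq] [Algebra Fq Fqk]
    (hq : Fintype.card Fq = q)
    (hqk : Fintype.card Fqk = q ^ k)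
    (γ : Fqkˣ)
    (hC : {w : ℕ | ∃ u v : Fqk, ¬ (u = 0 ∧ v = 0) ∧
      hammingNorm (fun i : Fin n =>
        Algebra.trace Fq Fqk
          (u * ((γ⁻¹ : Fqkˣ) : Fqk) ^ (d * (i : ℕ)) +
           v * ((γ⁻¹ : Fqkˣ) : Fqk) ^ ((d + D) * (i : ℕ)))) = w}
      = {w₁, w₂}) :
    q ^ (2 * k - 2) ∣ w₁ * w₂ := by
  have hfinrank : Module.finrank Fq Fqk = k := by
    refine Nat.pow_right_injective (hq ▸ Fintype.one_lt_card) ?_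
    change q ^ _ = q ^ k
    rw [← hqk, Module.card_eq_pow_finrank (K := Fq) (V := Fqk), hq]
  have hweights : ∀ p ≠ 0, hammingNorm (traceCode Fq Fqk n d (d + D) (γ⁻¹ : Fqkˣ) p) = w₁ ∨
      hammingNorm (traceCode Fq Fqk n d (d + D) (γ⁻¹ : Fqkˣ) p) = w₂ := fun p hp =>
    (hC ▸ ⟨p.1, p.2, fun h => hp (Prod.ext h.1 h.2), rfl⟩ : _ ∈ ({w₁, w₂} : Set ℕ))
  have h := LinearMap.pow_finrank_sub_two_dvd_mul_of_hammingNorm_eq_or_eq _ hweights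
  rwa [hq, Module.finrank_prod, hfinrank, ← two_mul] at h

/-- If the code `C` is a two-weight code with distinct nonzero Hamming weights
`w₁` and `w₂`, then `q^(2k-2)` divides `w₁ w₂`. -/
theorem q_pow_divides_weight_product
    (q n k d e D w₁ w₂ : ℕ)
    (Fq Fqk : Type) [Field Fq] [Field Fqk] [Fintype Fq] [Fintype Fqk]
    [DecidableEq Fq] [Algebra Fq Fqk]
    (hq : Fintype.card Fq = q)
    (hqk : Fintype.card Fqk = q ^ k)
    (hn : 3 ≤ n) (hnq : Nat.Coprime n q)
    (hk : k = orderOf (q : ZMod n))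
    (hd : 0 < d) (he : 1 < e)
    (hde : d * e ∣ q - 1)
    (hD : D = (q ^ k - 1) / e)
    (hdn : q ^ k - 1 ∣ d * n)
    (γ : Fqkˣ) (hγ : ∀ x : Fqkˣ, x ∈ Subgroup.zpowers γ)
    (hne : w₁ ≠ w₂) (hw₁ : w₁ ≠ 0) (hw₂ : w₂ ≠ 0)
    (hC : {w : ℕ | ∃ u v : Fqk, ¬ (u = 0 ∧ v = 0) ∧
      hammingNorm (fun i : Fin n =>
        Algebra.trace Fq Fqk
          (u * ((γ⁻¹ : Fqkˣ) : Fqk) ^ (d * (i : ℕ)) +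
           v * ((γ⁻¹ : Fqkˣ) : Fqk) ^ ((d + D) * (i : ℕ)))) = w}
      = {w₁, w₂}) :
    q ^ (2 * k - 2) ∣ w₁ * w₂ :=
  q_pow_divides_weight_product_general q n k d D w₁ w₂ Fq Fqk hq hqk γ hC
end

section
/- Let $p$ be a prime, $\varepsilon \in \{1, -1\}$, and let $s, \theta, h, g, m$ be positive integers with $g \ge 2$, $h$ equal to the multiplicative order of $p$ modulo $g$, $h \ge 2\theta$, $m \mid (g-1)$, $m p^{s\theta} \equiv \varepsilon \pmod{g}$, and $m(g-m) = (g-1) p^{s(h-2\theta)}$. If $p^{2s(h-\theta)}$ divides $p^{s(h-\theta)} - \varepsilon m$ (as an integer), then $\varepsilon = 1$, $s = 1$, $h = 2\theta$, $g = p^\theta + 1$, and $m = p^\theta$; in particular $p^{s(h-\theta)} - \varepsilon m = 0$. -/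
/-!
Put `A = p^(s(h-θ)) = B·C` with `B = p^(s(h-2θ))` and `C = p^(sθ) ≥ 2`. Already `A ∣ A - εm` gives
`A ∣ m`, so `m ≥ A ≥ 2B`. Writing `g - 1 = mt`, the relation `m(g-m) = (g-1)B` becomes `g - m = tB`,
and `t ≥ 2` would force `m < 2B`; hence `t = 1`, i.e. `m = g - 1` and `B = 1`, so `h = 2θ`.
The congruence then reads `-C ≡ ε (mod g)`. For `ε = -1` this says `g ∣ C - 1` with
`0 < C - 1 < g`, impossible; for `ε = 1` it gives `g ≤ C + 1`, so `m = C = A` and `g = C + 1`.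
Finally `g < p^h = p^(2θ)` because `g ∣ p^h - 1`, which forces `s = 1`.
-/

theorem Int.dvd_of_dvd_sub_mul_of_isUnit {a b ε : ℤ} (hε : IsUnit ε) (h : a ∣ a - ε * b) :
    a ∣ b :=
  hε.dvd_mul_left.mp ((dvd_sub_right dvd_rfl).mp h)

theorem Int.dvd_add_of_sub_one_mul_modEq {n c e : ℤ} (h : (n - 1) * c ≡ e [ZMOD n]) :
    n ∣ c + e := by
  have hdiv : n ∣ e - (n - 1) * c := Int.ModEq.dvd h
  have hsplit : c + e = (e - (n - 1) * c) + n * c := by ring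
  rw [hsplit]
  exact dvd_add hdiv (dvd_mul_right n c)

theorem Nat.lt_pow_orderOf_natCast {n a : ℕ} (ha : 1 < a) (hpos : 0 < orderOf (a : ZMod n)) :
    n < a ^ orderOf (a : ZMod n) := by
  set k := orderOf (a : ZMod n)
  have hcast : ((a ^ k : ℕ) : ZMod n) = ((1 : ℕ) : ZMod n) := by
    push_cast
    exact pow_orderOf_eq_one _
  have hk : 1 < a ^ k := Nat.one_lt_pow hpos.ne' ha
  have hdvd : n ∣ a ^ k - 1 :=
    (Nat.modEq_iff_dvd' hk.le).mp ((ZMod.natCast_eq_natCast_iff _ _ _).mp hcast).symm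
  have := Nat.le_of_dvd (by omega) hdvd
  omega

theorem Nat.eq_sub_one_of_mul_sub_eq {g m B : ℕ} (hg : 2 ≤ g) (hmg : m ∣ g - 1)
    (hrel : m * (g - m) = (g - 1) * B) (hB : 2 * B ≤ m) : m = g - 1 ∧ B = 1 := by
  obtain ⟨t, ht⟩ := hmg
  have hm : 0 < m := Nat.pos_of_ne_zero (by rintro rfl; omega)
  have hgm : g - m = t * B := by
    apply Nat.eq_of_mul_eq_mul_left hm
    rw [hrel, ht]
    ring
  obtain ⟨u, rfl⟩ : ∃ u, t = u + 1 :=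
    Nat.exists_eq_succ_of_ne_zero (by rintro rfl; rw [mul_zero] at ht; omega)
  have hrel' : m * u + 1 = (u + 1) * B := by
    rw [Nat.mul_succ] at ht
    omega
  obtain rfl : u = 0 := by
    by_contra hu
    have : 2 * B * u ≤ m * u := Nat.mul_le_mul_right _ hB
    have : (u + 1) * B ≤ 2 * B * u := by nlinarith [Nat.pos_of_ne_zero hu]
    omega
  omega

theorem case_one_divisibility_general
    (p : ℕ) (hp : p.Prime) (ε : ℤ) (hε : ε = 1 ∨ ε = -1)
    (s θ h g m : ℕ)
    (hs : 0 < s) (hθ : 0 < θ) (hm : 0 < m)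
    (hg : 2 ≤ g)
    (hord : h = orderOf (p : ZMod g))
    (hhθ : 2 * θ ≤ h)
    (hmg : m ∣ g - 1)
    (hcong : (m : ℤ) * (p : ℤ) ^ (s * θ) ≡ ε [ZMOD (g : ℤ)])
    (hmgm : m * (g - m) = (g - 1) * p ^ (s * (h - 2 * θ)))
    (hdvd : (p : ℤ) ^ (2 * s * (h - θ)) ∣ (p : ℤ) ^ (s * (h - θ)) - ε * m) :
    ε = 1 ∧ s = 1 ∧ h = 2 * θ ∧ g = p ^ θ + 1 ∧ m = p ^ θ ∧
    (p : ℤ) ^ (s * (h - θ)) - ε * m = 0 := by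
  have hp1 : 1 < p := hp.one_lt
  have hC : 2 ≤ p ^ (s * θ) := le_trans hp.two_le (Nat.le_self_pow (by positivity) p)
  have hAm : p ^ (s * (h - θ)) ≤ m := by
    have hsq : (p : ℤ) ^ (s * (h - θ)) ∣ (p : ℤ) ^ (2 * s * (h - θ)) :=
      pow_dvd_pow _ (by nlinarith)
    have := Int.dvd_of_dvd_sub_mul_of_isUnit (Int.isUnit_iff.mpr hε) (hsq.trans hdvd)
    exact Nat.le_of_dvd hm (by exact_mod_cast this)
  have hA : p ^ (s * (h - θ)) = p ^ (s * (h - 2 * θ)) * p ^ (s * θ) := by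
    rw [← pow_add, ← Nat.mul_add, show h - 2 * θ + θ = h - θ by omega]
  obtain ⟨hmg1, hB⟩ := Nat.eq_sub_one_of_mul_sub_eq hg hmg hmgm (by nlinarith)
  have hh : h = 2 * θ := by
    rcases (Nat.pow_eq_one.mp hB) with hp_one | h0
    · omega
    · rcases Nat.mul_eq_zero.mp h0 with h0 | h0 <;> omega
  subst hh
  rw [show 2 * θ - θ = θ by omega] at hdvd hAm ⊢
  have hgC : (g : ℤ) ∣ (p : ℤ) ^ (s * θ) + ε := by
    apply Int.dvd_add_of_sub_one_mul_modEq
    rwa [hmg1, Nat.cast_sub (by omega), Nat.cast_one] at hcong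
  rcases hε with rfl | rfl
  · have hgle : g ≤ p ^ (s * θ) + 1 := by exact_mod_cast Int.le_of_dvd (by positivity) hgC
    have hmC : m = p ^ (s * θ) := by omega
    have hgp : g < p ^ (2 * θ) := by
      rw [hord]
      exact Nat.lt_pow_orderOf_natCast hp1 (by omega)
    have hsθ : s * θ < 2 * θ := (pow_lt_pow_iff_right₀ hp1).mp (by omega)
    obtain rfl : s = 1 := by
      have := Nat.lt_of_mul_lt_mul_right hsθ
      omega
    rw [one_mul] at hmC
    refine ⟨rfl, rfl, rfl, by omega, hmC, ?_⟩
    simp [hmC]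
  · exfalso
    have hC' : (2 : ℤ) ≤ (p : ℤ) ^ (s * θ) := by exact_mod_cast hC
    have hgle : (g : ℤ) ≤ (p : ℤ) ^ (s * θ) + -1 := Int.le_of_dvd (by omega) hgC
    have hAm' : (p : ℤ) ^ (s * θ) ≤ m := by exact_mod_cast hAm
    omega

/-- Case 1 in the proof of the main theorem: if `p^(2s(h-θ))` divides
`p^(s(h-θ)) - ε m`, then `ε = 1`, `s = 1`, `h = 2θ`, `g = p^θ + 1`, `m = p^θ`;
in particular `p^(s(h-θ)) - ε m = 0`. -/
theorem case_one_divisibility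
    (p : ℕ) (hp : p.Prime) (ε : ℤ) (hε : ε = 1 ∨ ε = -1)
    (s θ h g m : ℕ)
    (hs : 0 < s) (hθ : 0 < θ) (hh : 0 < h) (hm : 0 < m)
    (hg : 2 ≤ g)
    (hord : h = orderOf (p : ZMod g))
    (hhθ : 2 * θ ≤ h)
    (hmg : m ∣ g - 1)
    (hcong : (m : ℤ) * (p : ℤ) ^ (s * θ) ≡ ε [ZMOD (g : ℤ)])
    (hmgm : m * (g - m) = (g - 1) * p ^ (s * (h - 2 * θ)))
    (hdvd : (p : ℤ) ^ (2 * s * (h - θ)) ∣ (p : ℤ) ^ (s * (h - θ)) - ε * m) :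
    ε = 1 ∧ s = 1 ∧ h = 2 * θ ∧ g = p ^ θ + 1 ∧ m = p ^ θ ∧
    (p : ℤ) ^ (s * (h - θ)) - ε * m = 0 :=
  case_one_divisibility_general p hp ε hε s θ h g m hs hθ hm hg hord hhθ hmg hcong hmgm hdvd
end

section
/- Let $p$ be a prime, $\varepsilon \in \{1, -1\}$, and let $s, \theta, h, g, m$ be positive integers with $g \ge 2$, $h$ equal to the multiplicative order of $p$ modulo $g$, $2\theta \le h$ and $\theta < h$, $m \mid (g-1)$, $m p^{s\theta} \equiv \varepsilon \pmod{g}$, and $m(g-m) = (g-1) p^{s(h-2\theta)}$. If $p^{s(h-\theta)} - \varepsilon m + \varepsilon g \ne 0$, then $p^{2s(h-\theta)}$ does not divide $p^{s(h-\theta)} - \varepsilon m + \varepsilon g$. -/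
/-!
Write `K = s(h-θ) = sθ + s(h-2θ)` and `N = p^K + ε(g - m)`. If `p^(2K) ∣ N` then `p^K ∣ g - m`,
so `p^K ≤ g - m`, and multiplying by `m` and using `m(g-m) = (g-1)p^(s(h-2θ))` gives
`2 ≤ m p^(sθ) ≤ g - 1`. A number in that range can only be `≡ ±1 (mod g)` if it is `g - 1` and
the sign is `-1`; but then `g - m = p^K` and `N = 0`.
-/

theorem eq_neg_one_and_add_one_eq_of_modEq_sign {a g ε : ℤ} (hε : ε = 1 ∨ ε = -1)
    (h : a ≡ ε [ZMOD g]) (ha : 2 ≤ a) (hag : a < g) : ε = -1 ∧ a + 1 = g := by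
  have hle : g ≤ a - ε := Int.le_of_dvd (by omega) h.symm.dvd
  omega

theorem mul_le_of_mul_dvd_of_mul_eq {m x q r c : ℤ} (hm : 0 ≤ m) (hx : 0 < x) (hr : 0 < r)
    (hdvd : q * r ∣ x) (heq : m * x = c * r) : m * q ≤ c := by
  refine le_of_mul_le_mul_right ?_ hr
  calc m * q * r = m * (q * r) := mul_assoc m q r
    _ ≤ m * x := mul_le_mul_of_nonneg_left (Int.le_of_dvd hx hdvd) hm
    _ = c * r := heq

theorem case_two_no_divisibility_general
    (p : ℕ) (hp : p.Prime) (ε : ℤ) (hε : ε = 1 ∨ ε = -1)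
    (s θ h g m : ℕ)
    (hs : 0 < s) (hθ : 0 < θ) (hm : 0 < m)
    (hg : 2 ≤ g)
    (hhθ : 2 * θ ≤ h)
    (hmg : m ∣ g - 1)
    (hcong : (m : ℤ) * (p : ℤ) ^ (s * θ) ≡ ε [ZMOD (g : ℤ)])
    (hmgm : m * (g - m) = (g - 1) * p ^ (s * (h - 2 * θ)))
    (hne : (p : ℤ) ^ (s * (h - θ)) - ε * m + ε * g ≠ 0) :
    ¬ ((p : ℤ) ^ (2 * s * (h - θ)) ∣ (p : ℤ) ^ (s * (h - θ)) - ε * m + ε * g) := by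
  intro hdvd
  have hm_lt : m < g := by have := Nat.le_of_dvd (by omega) hmg; omega
  have hK : s * (h - θ) = s * θ + s * (h - 2 * θ) := by rw [← Nat.mul_add]; congr 1; omega
  have hmgmZ : (m : ℤ) * (g - m) = (g - 1) * (p : ℤ) ^ (s * (h - 2 * θ)) := by
    have := congrArg (Nat.cast : ℕ → ℤ) hmgm
    push_cast [Nat.cast_sub hm_lt.le, Nat.cast_sub (by omega : 1 ≤ g)] at this
    exact this
  have hpK : (p : ℤ) ^ (s * θ) * (p : ℤ) ^ (s * (h - 2 * θ)) ∣ (g : ℤ) - m := by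
    have hN : (p : ℤ) ^ (s * (h - θ)) - ε * m + ε * g = p ^ (s * (h - θ)) + ε * (g - m) := by ring
    have := (pow_dvd_pow (p : ℤ) (by rw [mul_assoc]; omega : s * (h - θ) ≤ 2 * s * (h - θ))).trans hdvd
    rw [hN, dvd_add_right dvd_rfl, (Int.isUnit_iff.mpr hε).dvd_mul_left, hK, pow_add] at this
    exact this
  have hupper : (m : ℤ) * p ^ (s * θ) ≤ g - 1 :=
    mul_le_of_mul_dvd_of_mul_eq (by positivity) (by omega) (by positivity [hp.pos]) hpK hmgmZ
  have hlower : (2 : ℤ) ≤ m * p ^ (s * θ) := by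
    have : 1 < p ^ (s * θ) := Nat.one_lt_pow (by positivity) hp.one_lt
    exact_mod_cast Nat.mul_le_mul (Nat.succ_le_of_lt hm) this
  obtain ⟨rfl, hsum⟩ := eq_neg_one_and_add_one_eq_of_modEq_sign hε hcong hlower (by omega)
  have hgm : (g : ℤ) - m = p ^ (s * (h - θ)) := by
    refine mul_left_cancel₀ (by exact_mod_cast hm.ne' : (m : ℤ) ≠ 0) ?_
    rw [hmgmZ, hK, pow_add, ← hsum]; ring
  exact hne (by linarith)

/-- Case 2 in the proof of the main theorem: if `p^(s(h-θ)) - ε m + ε g ≠ 0`,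
then `p^(2s(h-θ))` does not divide `p^(s(h-θ)) - ε m + ε g`. -/
theorem case_two_no_divisibility
    (p : ℕ) (hp : p.Prime) (ε : ℤ) (hε : ε = 1 ∨ ε = -1)
    (s θ h g m : ℕ)
    (hs : 0 < s) (hθ : 0 < θ) (hh : 0 < h) (hm : 0 < m)
    (hg : 2 ≤ g)
    (hord : h = orderOf (p : ZMod g))
    (hhθ : 2 * θ ≤ h) (hθh : θ < h)
    (hmg : m ∣ g - 1)
    (hcong : (m : ℤ) * (p : ℤ) ^ (s * θ) ≡ ε [ZMOD (g : ℤ)])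
    (hmgm : m * (g - m) = (g - 1) * p ^ (s * (h - 2 * θ)))
    (hne : (p : ℤ) ^ (s * (h - θ)) - ε * m + ε * g ≠ 0) :
    ¬ ((p : ℤ) ^ (2 * s * (h - θ)) ∣ (p : ℤ) ^ (s * (h - θ)) - ε * m + ε * g) :=
  case_two_no_divisibility_general p hp ε hε s θ h g m hs hθ hm hg hhθ hmg hcong hmgm hne
end

section
/- There do not exist a prime power $q$ and positive integers $k$ and $d$ with $d \mid (q-1)$ and $(q-1)/d \ge 3$ such that $(q^k-1)\Big(\frac{q-1}{d}\Big)^2 q^k = \Big(\frac{(q^k-1)(q-1)}{d}\Big)^2 + \frac{(q^k-1)(q-1)}{d} + 2(q-1)\Big(\frac{q-1}{d} - 1\Big)$. Indeed, this equation forces $\frac{(q^k-1)(q-1)}{d}$ to divide $2(q-1)\big(\frac{q-1}{d} - 1\big)$, which is only possible when $k = 1$ and $(q-1)/d$ divides $2$. -/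
/-!
Write `N = q^k - 1` and `m = (q-1)/d`, so that `q^k = N + 1`. Cancelling `N²m²` from both sides
leaves `N m (m-1) = 2(q-1)(m-1)`, i.e. `N m = 2(q-1)`. But `N ≥ q - 1 ≥ 1` and `m ≥ 3`, so
`N m ≥ 3(q-1) > 2(q-1)`. So the equation has no solution at all, and the second conjunct holds
vacuously.
-/

theorem mul_eq_two_mul_of_weight_equation {N m e : ℕ} (hm : 2 ≤ m)
    (h : N * m ^ 2 * (N + 1) = (N * m) ^ 2 + N * m + 2 * e * (m - 1)) : N * m = 2 * e := by
  obtain ⟨n, rfl⟩ : ∃ n, m = n + 1 := ⟨m - 1, by omega⟩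
  rw [Nat.add_sub_cancel] at h
  have hcancel : N * (n + 1) * n = 2 * e * n := by linear_combination h
  exact Nat.eq_of_mul_eq_mul_right (by omega) hcancel

theorem weight_equation_ne {q k d : ℕ} (hk : 1 ≤ k) (hm : 3 ≤ (q - 1) / d) :
    (q ^ k - 1) * ((q - 1) / d) ^ 2 * q ^ k ≠
      ((q ^ k - 1) * ((q - 1) / d)) ^ 2 + (q ^ k - 1) * ((q - 1) / d) +
        2 * (q - 1) * ((q - 1) / d - 1) := by
  intro h
  have hq : 3 ≤ q - 1 := hm.trans (Nat.div_le_self _ _)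
  have hqk : q ≤ q ^ k := Nat.le_self_pow (by omega) q
  set N := q ^ k - 1
  set m := (q - 1) / d
  rw [show q ^ k = N + 1 by omega] at h
  have hNm : N * m = 2 * (q - 1) := mul_eq_two_mul_of_weight_equation (by omega) h
  have hN : q - 1 ≤ N := by omega
  nlinarith

/-- There do not exist a prime power `q` and positive integers `k`, `d` with
`d ∣ q-1` and `(q-1)/d ≥ 3` satisfying
`(q^k-1)((q-1)/d)² q^k = ((q^k-1)(q-1)/d)² + (q^k-1)(q-1)/d + 2(q-1)((q-1)/d - 1)`.
Indeed, the equation forces `(q^k-1)(q-1)/d` to divide `2(q-1)((q-1)/d - 1)`,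
which is only possible when `k = 1` and `(q-1)/d ∣ 2`. -/
theorem no_solution_weight_equation :
    (¬ ∃ q k d : ℕ, IsPrimePow q ∧ 1 ≤ k ∧ 0 < d ∧ d ∣ q - 1 ∧
      3 ≤ (q - 1) / d ∧
      (q ^ k - 1) * ((q - 1) / d) ^ 2 * q ^ k =
        ((q ^ k - 1) * ((q - 1) / d)) ^ 2 + (q ^ k - 1) * ((q - 1) / d) +
          2 * (q - 1) * ((q - 1) / d - 1)) ∧
    (∀ q k d : ℕ, IsPrimePow q → 1 ≤ k → 0 < d → d ∣ q - 1 →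
      3 ≤ (q - 1) / d →
      (q ^ k - 1) * ((q - 1) / d) ^ 2 * q ^ k =
        ((q ^ k - 1) * ((q - 1) / d)) ^ 2 + (q ^ k - 1) * ((q - 1) / d) +
          2 * (q - 1) * ((q - 1) / d - 1) →
      ((q ^ k - 1) * ((q - 1) / d) ∣ 2 * (q - 1) * ((q - 1) / d - 1) ∧
        k = 1 ∧ (q - 1) / d ∣ 2)) := by
  refine ⟨?_, fun _ _ _ _ hk _ _ hm h => (weight_equation_ne hk hm h).elim⟩
  rintro ⟨_, _, _, _, hk, _, _, hm, h⟩
  exact weight_equation_ne hk hm h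
end
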